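/- arXiv:math/0404558 — 10 statements merged into one kernel-verified Lean document; each statement's English description precedes it below -/
import Mathlib

section
/- For 0 < α < 1 and Re β > 0, the function 𝕃_{α,β}(z) = ∑_{n=0}^∞ (-1)^n Γ(αn+β) z^n / n! has infinite radius of convergence, i.e., the series converges for all z ∈ ℂ. -/
/-!
Since `‖Γ(s)‖ ≤ Γ(Re s)`, the series is dominated by the real series
`∑ Γ(αn + c) ‖z‖ⁿ / n!` with `c = Re β`. Log-convexity of `Γ` gives `Γ(x + α) ≤ Γ(x) x^α`, so with
`x = αn + c ≤ (1 + c)(n + 1)` consecutive terms of the majorant have ratio at most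
`(1 + c) ‖z‖ x^(α - 1)`, which tends to `0` because `α < 1`.
-/

open Complex Filter Topology

theorem Complex.norm_Gamma_le_Gamma_re {s : ℂ} (hs : 0 < s.re) :
    ‖Gamma s‖ ≤ Real.Gamma s.re := by
  rw [Gamma_eq_integral hs, GammaIntegral, Real.Gamma_eq_integral hs]
  refine (MeasureTheory.norm_integral_le_integral_norm _).trans_eq ?_
  refine MeasureTheory.setIntegral_congr_fun measurableSet_Ioi fun x hx => ?_
  simp only [norm_mul, norm_cpow_eq_rpow_re_of_pos hx, norm_real, Real.norm_eq_abs,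
    abs_of_pos (Real.exp_pos _), sub_re, one_re]

theorem Real.Gamma_add_le_mul_rpow {x a : ℝ} (hx : 0 < x) (ha₀ : 0 < a) (ha₁ : a < 1) :
    Gamma (x + a) ≤ Gamma x * x ^ a := by
  have hΓ : 0 < Gamma x := Gamma_pos_of_pos hx
  have h := Gamma_mul_add_mul_le_rpow_Gamma_mul_rpow_Gamma hx (by linarith : 0 < x + 1)
    (by linarith : 0 < 1 - a) ha₀ (by ring)
  rw [show (1 - a) * x + a * (x + 1) = x + a by ring, Gamma_add_one hx.ne',
    mul_rpow hx.le hΓ.le] at h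
  calc Gamma (x + a) ≤ Gamma x ^ (1 - a) * (x ^ a * Gamma x ^ a) := h
    _ = Gamma x ^ (1 - a + a) * x ^ a := by rw [rpow_add hΓ]; ring
    _ = Gamma x * x ^ a := by norm_num

theorem summable_of_norm_succ_le_mul_of_tendsto_zero {E : Type*} [SeminormedAddCommGroup E]
    [CompleteSpace E] {f : ℕ → E} {b : ℕ → ℝ} (hb : Tendsto b atTop (𝓝 0))
    (h : ∀ᶠ n in atTop, ‖f (n + 1)‖ ≤ b n * ‖f n‖) : Summable f := by
  refine summable_of_ratio_norm_eventually_le (r := 1 / 2) (by norm_num) ?_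
  filter_upwards [h, hb.eventually_le_const (by norm_num : (0 : ℝ) < 1 / 2)] with n hf hbn
  exact hf.trans (mul_le_mul_of_nonneg_right hbn (norm_nonneg _))

theorem summable_Gamma_mul_add_mul_pow_div_factorial {α c A : ℝ} (hα₀ : 0 < α) (hα₁ : α < 1)
    (hc : 0 < c) (hA : 0 ≤ A) :
    Summable fun n : ℕ => Real.Gamma (α * n + c) * A ^ n / n.factorial := by
  set x : ℕ → ℝ := fun n => α * n + c with hx_def
  have hx_pos (n : ℕ) : 0 < x n := by positivity
  have hx_tendsto : Tendsto x atTop atTop :=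
    tendsto_atTop_add_const_right _ _ (tendsto_natCast_atTop_atTop.const_mul_atTop hα₀)
  refine summable_of_norm_succ_le_mul_of_tendsto_zero (b := fun n => (1 + c) * A * x n ^ (α - 1))
    ?_ (Eventually.of_forall fun n => ?_)
  · have h := (tendsto_rpow_neg_atTop (by linarith : 0 < 1 - α)).comp hx_tendsto
    rw [neg_sub] at h
    simpa using h.const_mul ((1 + c) * A)
  · have hx_le : x n ≤ (1 + c) * (n + 1) := by
      have : α * n ≤ n := mul_le_of_le_one_left n.cast_nonneg hα₁.le
      nlinarith [(n.cast_nonneg : (0 : ℝ) ≤ n)]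
    have hΓ : Real.Gamma (x (n + 1)) ≤ (1 + c) * x n ^ (α - 1) * (n + 1) * Real.Gamma (x n) :=
      calc Real.Gamma (x (n + 1)) = Real.Gamma (x n + α) := by
            simp only [hx_def]; push_cast; ring_nf
        _ ≤ Real.Gamma (x n) * x n ^ α := Real.Gamma_add_le_mul_rpow (hx_pos n) hα₀ hα₁
        _ = Real.Gamma (x n) * x n ^ (α - 1) * x n := by
          rw [Real.rpow_sub_one (hx_pos n).ne', mul_assoc, div_mul_cancel₀ _ (hx_pos n).ne']
        _ ≤ Real.Gamma (x n) * x n ^ (α - 1) * ((1 + c) * (n + 1)) := by gcongr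
        _ = _ := by ring
    rw [Real.norm_of_nonneg (by positivity), Real.norm_of_nonneg (by positivity)]
    calc Real.Gamma (x (n + 1)) * A ^ (n + 1) / (n + 1).factorial
        ≤ (1 + c) * x n ^ (α - 1) * (n + 1) * Real.Gamma (x n) * A ^ (n + 1) /
            (n + 1).factorial := by
          gcongr
      _ = _ := by
          rw [Nat.factorial_succ, pow_succ]; push_cast; field_simp; simp only [hx_def]; ring

/-- For `0 < α < 1` and `Re β > 0`, the series `∑ (-1)^n Γ(αn+β) z^n / n!`
converges for every `z ∈ ℂ` (infinite radius of convergence). -/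
theorem stmt_0 (α : ℝ) (β : ℂ) (hα0 : 0 < α) (hα1 : α < 1) (hβ : 0 < β.re) :
    ∀ z : ℂ, Summable (fun n : ℕ =>
      ((-1 : ℂ) ^ n * Complex.Gamma ((α : ℂ) * n + β) / (n.factorial : ℂ)) * z ^ n) := by
  intro z
  refine Summable.of_norm_bounded
    (summable_Gamma_mul_add_mul_pow_div_factorial hα0 hα1 hβ (norm_nonneg z)) fun n => ?_
  have hre : ((α : ℂ) * n + β).re = α * n + β.re := by simp
  rw [norm_mul, norm_div, norm_mul, norm_pow, norm_neg, norm_one, one_pow, one_mul, norm_pow,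
    norm_natCast, div_mul_eq_mul_div]
  gcongr
  exact hre ▸ norm_Gamma_le_Gamma_re (hre ▸ by positivity)
end

section
/- For 0 < α < 1, Re β > 0, and z ∈ ℂ with Re z ≥ 0 (or more restrictively z real positive), ∫_0^∞ x^{β-1} exp(-z x^α - x) dx = ∑_{n=0}^∞ (-1)^n Γ(αn+β) z^n / n!, i.e., the integral representation 𝕃_{α,β}(z) = ∫_0^∞ x^{β-1} e^{-z x^α - x} dx holds. -/
/-!
Expand `exp (-z x^α)` in its power series and integrate term by term: the `n`-th term gives
`(-z)^n Γ(αn + β) / n!` by Euler's integral. Interchanging sum and integral is justified by the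
summability of `|z|^n Γ(αn + Re β) / n!`. Log-convexity of `Γ` gives
`Γ(αn + b) ≤ Γ(b)^(1-α) Γ(n + b)^α`, and `|z|^n Γ(n + b)^α / n!` passes the ratio test since its
ratio `|z| (n + b)^α / (n + 1)` tends to `0` for `α < 1`.
-/

open Complex MeasureTheory Filter Topology Set
open scoped Nat

lemma tendsto_natCast_add_rpow_div_natCast_add_one {α b : ℝ} (hα0 : 0 ≤ α) (hα1 : α < 1)
    (hb : 0 ≤ b) : Tendsto (fun n : ℕ => ((n : ℝ) + b) ^ α / (n + 1)) atTop (𝓝 0) := by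
  have hpow : Tendsto (fun n : ℕ => (1 + b) ^ α * (n : ℝ) ^ (α - 1)) atTop (𝓝 0) := by
    simpa [neg_sub] using ((tendsto_rpow_neg_atTop (sub_pos.2 hα1)).comp
      tendsto_natCast_atTop_atTop).const_mul ((1 + b) ^ α)
  refine squeeze_zero' (.of_forall fun n => by positivity) ?_ hpow
  filter_upwards [eventually_ge_atTop 1] with n hn
  have hn : (1 : ℝ) ≤ n := by exact_mod_cast hn
  calc ((n : ℝ) + b) ^ α / (n + 1) ≤ ((1 + b) * n) ^ α / n := by
        gcongr
        · nlinarith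
        · linarith
    _ = (1 + b) ^ α * (n : ℝ) ^ (α - 1) := by
        rw [Real.mul_rpow (by positivity) (by positivity), Real.rpow_sub_one (by positivity),
          mul_div_assoc]

lemma summable_pow_mul_rpow_Gamma_natCast_add_div_factorial {α b : ℝ} (hα0 : 0 ≤ α)
    (hα1 : α < 1) (hb : 0 < b) (L : ℝ) :
    Summable (fun n : ℕ => L ^ n * Real.Gamma (n + b) ^ α / n !) := by
  have hratio : ∀ n : ℕ, L ^ (n + 1) * Real.Gamma (↑(n + 1) + b) ^ α / (n + 1)! =
      L ^ n * Real.Gamma (n + b) ^ α / n ! * (L * ((n : ℝ) + b) ^ α / (n + 1)) := by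
    intro n
    have hnb : (0 : ℝ) < n + b := by positivity
    have hΓ : 0 ≤ Real.Gamma (n + b) := (Real.Gamma_pos_of_pos hnb).le
    rw [Nat.cast_succ, add_right_comm, Real.Gamma_add_one hnb.ne',
      Real.mul_rpow (by positivity) hΓ, Nat.factorial_succ, Nat.cast_mul, Nat.cast_succ]
    field_simp
    ring
  refine summable_of_ratio_norm_eventually_le (r := 1 / 2) (by norm_num) ?_
  have hsmall := ((tendsto_natCast_add_rpow_div_natCast_add_one hα0 hα1 hb.le).const_mul
    |L|).eventually_le_const (by norm_num : |L| * 0 < 1 / 2)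
  filter_upwards [hsmall] with n hn
  rw [hratio, norm_mul, mul_comm]
  gcongr
  rw [Real.norm_eq_abs, abs_div, abs_mul, abs_of_nonneg (by positivity : (0 : ℝ) ≤ (n + b) ^ α),
    abs_of_pos (by positivity : (0 : ℝ) < n + 1), mul_div_assoc]
  exact hn

lemma Real.Gamma_mul_add_le_rpow_Gamma_mul_rpow_Gamma {α b t : ℝ} (hα0 : 0 < α) (hα1 : α < 1)
    (hb : 0 < b) (ht : 0 < t + b) :
    Real.Gamma (α * t + b) ≤ Real.Gamma b ^ (1 - α) * Real.Gamma (t + b) ^ α := by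
  convert Real.Gamma_mul_add_mul_le_rpow_Gamma_mul_rpow_Gamma hb ht (sub_pos.2 hα1) hα0
    (sub_add_cancel 1 α) using 2
  ring

lemma summable_pow_mul_Gamma_mul_add_div_factorial {α b : ℝ} (hα0 : 0 < α) (hα1 : α < 1)
    (hb : 0 < b) (L : ℝ) :
    Summable (fun n : ℕ => L ^ n * Real.Gamma (α * n + b) / n !) := by
  refine ((summable_pow_mul_rpow_Gamma_natCast_add_div_factorial hα0.le hα1 hb |L|).mul_left
    (Real.Gamma b ^ (1 - α))).of_norm_bounded fun n => ?_
  have hΓ : 0 < Real.Gamma (α * n + b) := Real.Gamma_pos_of_pos (by positivity)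
  rw [Real.norm_eq_abs, abs_div, abs_mul, abs_pow, abs_of_pos hΓ, Nat.abs_cast, mul_div_assoc',
    mul_left_comm]
  gcongr
  exact Real.Gamma_mul_add_le_rpow_Gamma_mul_rpow_Gamma hα0 hα1 hb (by positivity)

lemma integral_norm_GammaIntegrand {s : ℂ} (hs : 0 < s.re) :
    ∫ x in Ioi (0 : ℝ), ‖(↑(Real.exp (-x)) : ℂ) * (x : ℂ) ^ (s - 1)‖ = Real.Gamma s.re := by
  rw [Real.Gamma_eq_integral hs]
  refine setIntegral_congr_fun measurableSet_Ioi fun x (hx : 0 < x) => ?_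
  rw [norm_mul, Complex.norm_real, Real.norm_of_nonneg (Real.exp_pos _).le,
    Complex.norm_cpow_eq_rpow_re_of_pos hx, sub_re, one_re]

lemma hasSum_exp_mul_cpow_mul_natCast_add (α : ℝ) (β z : ℂ) {x : ℝ} (hx : 0 < x) :
    HasSum (fun n : ℕ => (-z) ^ n / n ! * ((↑(Real.exp (-x)) : ℂ) * (x : ℂ) ^ (α * n + β - 1)))
      ((x : ℂ) ^ (β - 1) * cexp (-z * (x : ℂ) ^ (α : ℂ) - x)) := by
  have hx0 : (x : ℂ) ≠ 0 := ofReal_ne_zero.2 hx.ne'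
  have hexp := (NormedSpace.expSeries_div_hasSum_exp (-z * (x : ℂ) ^ (α : ℂ))).mul_left
    ((↑(Real.exp (-x)) : ℂ) * (x : ℂ) ^ (β - 1))
  rw [← Complex.exp_eq_exp_ℂ, mul_assoc, ofReal_exp, ofReal_neg, mul_left_comm,
    ← Complex.exp_add, ← sub_eq_neg_add] at hexp
  refine hexp.congr_fun fun n => ?_
  rw [add_sub_assoc, cpow_add _ _ hx0, cpow_mul_nat, mul_pow, ofReal_exp, ofReal_neg]
  ring

theorem stmt_1_general (α : ℝ) (β z : ℂ) (hα0 : 0 < α) (hα1 : α < 1) (hβ : 0 < β.re) :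
    ∫ x in Set.Ioi (0 : ℝ), (x : ℂ) ^ (β - 1) *
        Complex.exp (-z * (x : ℂ) ^ (α : ℂ) - x)
      = ∑' n : ℕ, ((-1 : ℂ) ^ n * Complex.Gamma ((α : ℂ) * n + β) / (n.factorial : ℂ)) * z ^ n := by
  have hre : ∀ n : ℕ, 0 < ((α : ℂ) * n + β).re := fun n => by
    simpa using add_pos_of_nonneg_of_pos (by positivity : 0 ≤ α * n) hβ
  have hnorm : ∀ n : ℕ, ∫ x in Ioi (0 : ℝ),
      ‖(-z) ^ n / n ! * ((↑(Real.exp (-x)) : ℂ) * (x : ℂ) ^ ((α : ℂ) * n + β - 1))‖ =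
      ‖z‖ ^ n * Real.Gamma (α * n + β.re) / n ! := fun n => by
    simp_rw [norm_mul ((-z) ^ n / (n ! : ℂ)), integral_const_mul,
      integral_norm_GammaIntegrand (hre n)]
    simp [mul_div_right_comm]
  calc _ = ∫ x in Ioi (0 : ℝ), ∑' n : ℕ,
        (-z) ^ n / n ! * ((↑(Real.exp (-x)) : ℂ) * (x : ℂ) ^ ((α : ℂ) * n + β - 1)) :=
        setIntegral_congr_fun measurableSet_Ioi fun x hx =>
          (hasSum_exp_mul_cpow_mul_natCast_add α β z hx).tsum_eq.symm
    _ = ∑' n : ℕ, (-z) ^ n / n ! * Complex.Gamma ((α : ℂ) * n + β) := by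
        have hsum := summable_pow_mul_Gamma_mul_add_div_factorial hα0 hα1 hβ ‖z‖
        rw [← integral_tsum_of_summable_integral_norm
          (fun n => (GammaIntegral_convergent (hre n)).const_mul _) (by simpa only [hnorm])]
        simp_rw [integral_const_mul, Gamma_eq_integral (hre _), GammaIntegral]
    _ = _ := tsum_congr fun n => by rw [neg_pow]; ring

/-- Integral representation of `𝕃_{α,β}`: for `0 < α < 1`, `Re β > 0`, `Re z ≥ 0`,
`∫_0^∞ x^{β-1} exp(-z x^α - x) dx = ∑ (-1)^n Γ(αn+β) z^n / n!`. -/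
theorem stmt_1 (α : ℝ) (β z : ℂ) (hα0 : 0 < α) (hα1 : α < 1) (hβ : 0 < β.re)
    (hz : 0 ≤ z.re) :
    ∫ x in Set.Ioi (0 : ℝ), (x : ℂ) ^ (β - 1) *
        Complex.exp (-z * (x : ℂ) ^ (α : ℂ) - x)
      = ∑' n : ℕ, ((-1 : ℂ) ^ n * Complex.Gamma ((α : ℂ) * n + β) / (n.factorial : ℂ)) * z ^ n :=
  stmt_1_general α β z hα0 hα1 hβ
end

section
/- For 0 < α < 1 and real u > 0, v > 0, h > 0: ∫_0^∞ x^{h-1} exp(-u x^α - v x) dx = v^{-h} · 𝕃_{α,h}(u/v^α). -/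
/-!
Expand `exp (-u x^α)` in its power series and integrate term by term against
`x^(h-1) e^(-v x)`: the `n`-th term gives `(-u)^n / n! · Γ(αn + h) / v^(αn + h)`.
The interchange is dominated convergence, with majorant series summing to
`x^(h-1) exp (u x^α - v x)`; this is integrable because `α < 1` gives
`u x^α ≤ K + v x / 2`.
-/

open MeasureTheory Real Filter Set

theorem exists_mul_rpow_le_add_mul {α u c : ℝ} (hα0 : 0 ≤ α) (hα1 : α < 1) (hu : 0 ≤ u)
    (hc : 0 < c) : ∃ K, ∀ x, 0 < x → u * x ^ α ≤ K + c * x := by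
  have hlim : Tendsto (fun x : ℝ => u * x ^ (-(1 - α))) atTop (nhds (u * 0)) :=
    (tendsto_rpow_neg_atTop (by linarith)).const_mul u
  rw [mul_zero] at hlim
  obtain ⟨M, hM⟩ := (hlim.eventually_le_const hc).exists_forall_of_atTop
  refine ⟨u * max M 1 ^ α, fun x hx => ?_⟩
  have hK : 0 ≤ u * max M 1 ^ α := by positivity
  rcases le_or_gt x (max M 1) with hxM | hxM
  · have := mul_le_mul_of_nonneg_left (rpow_le_rpow hx.le hxM hα0) hu
    nlinarith
  · have hsplit : u * x ^ α = u * x ^ (-(1 - α)) * x := by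
      rw [mul_assoc, ← rpow_add_one hx.ne']
      ring_nf
    have := mul_le_mul_of_nonneg_right (hM x (le_of_max_le_left hxM.le)) hx.le
    linarith

theorem integrableOn_rpow_mul_exp_mul_rpow_sub_mul {α u v h : ℝ} (hα0 : 0 ≤ α)
    (hα1 : α < 1) (hu : 0 ≤ u) (hv : 0 < v) (hh : 0 < h) :
    IntegrableOn (fun x => x ^ (h - 1) * exp (u * x ^ α - v * x)) (Ioi 0) := by
  obtain ⟨K, hK⟩ := exists_mul_rpow_le_add_mul hα0 hα1 hu (half_pos hv)
  have hmajor : IntegrableOn (fun x => exp K * (x ^ (h - 1) * exp (-(v / 2) * x ^ (1 : ℝ))))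
      (Ioi 0) :=
    (integrableOn_rpow_mul_exp_neg_mul_rpow (by linarith) one_pos (half_pos hv)).const_mul _
  refine hmajor.mono' (Measurable.aestronglyMeasurable (by fun_prop)) ?_
  filter_upwards [self_mem_ae_restrict measurableSet_Ioi] with x (hx : 0 < x)
  rw [norm_of_nonneg (by positivity), rpow_one, mul_left_comm, ← exp_add]
  gcongr
  linarith [hK x hx]

theorem hasSum_exp_series_mul_rpow_mul_exp {α v h : ℝ} (w : ℝ) {x : ℝ} (hx : 0 < x) :
    HasSum (fun n : ℕ => w ^ n / n.factorial * (x ^ (α * n + h - 1) * exp (-(v * x))))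
      (x ^ (h - 1) * exp (w * x ^ α - v * x)) := by
  have hterm : ∀ n : ℕ, w ^ n / n.factorial * (x ^ (α * n + h - 1) * exp (-(v * x)))
      = x ^ (h - 1) * exp (-(v * x)) * ((w * x ^ α) ^ n / n.factorial) := by
    intro n
    rw [show α * n + h - 1 = α * n + (h - 1) by ring, rpow_add hx, rpow_mul hx.le, rpow_natCast]
    ring
  have hexp := NormedSpace.expSeries_div_hasSum_exp (w * x ^ α)
  rw [← exp_eq_exp_ℝ] at hexp
  rw [funext hterm, show w * x ^ α - v * x = -(v * x) + w * x ^ α by ring, exp_add, ← mul_assoc]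
  exact hexp.mul_left _

/-- Lemma 1.2 (case `0 < α < 1`): for `u, v, h > 0`,
`∫_0^∞ x^{h-1} exp(-u x^α - v x) dx = v^{-h} 𝕃_{α,h}(u/v^α)`. -/
theorem stmt_2 (α u v h : ℝ) (hα0 : 0 < α) (hα1 : α < 1)
    (hu : 0 < u) (hv : 0 < v) (hh : 0 < h) :
    ∫ x in Set.Ioi (0 : ℝ), x ^ (h - 1) * Real.exp (-u * x ^ α - v * x)
      = v ^ (-h) *
        ∑' n : ℕ, ((-1 : ℝ) ^ n * Real.Gamma (α * n + h) / (n.factorial : ℝ)) * (u / v ^ α) ^ n := by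
  set F : ℝ → ℕ → ℝ → ℝ :=
    fun w n x => w ^ n / n.factorial * (x ^ (α * n + h - 1) * exp (-(v * x)))
  have hF_int : ∀ n : ℕ, ∫ x in Ioi 0, F (-u) n x
      = v ^ (-h) * ((-1) ^ n * Gamma (α * n + h) / n.factorial * (u / v ^ α) ^ n) := by
    intro n
    rw [integral_const_mul, integral_rpow_mul_exp_neg_mul_Ioi (by positivity) hv, one_div,
      inv_rpow hv.le, rpow_add hv, rpow_mul hv.le, rpow_natCast, rpow_neg hv.le, neg_pow, div_pow]
    field_simp
  have hF_norm : ∀ n, ∀ x : ℝ, 0 < x → ‖F (-u) n x‖ = F u n x := by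
    intro n x hx
    have hpos : 0 ≤ x ^ (α * n + h - 1) * exp (-(v * x)) := by positivity
    simp only [F, norm_mul, norm_div, norm_pow, norm_neg, Real.norm_natCast,
      norm_of_nonneg hu.le, norm_of_nonneg hpos]
  have hsum := hasSum_integral_of_dominated_convergence (μ := volume.restrict (Ioi 0)) (F u)
    (fun n => Measurable.aestronglyMeasurable (by fun_prop))
    (fun n => (ae_restrict_mem measurableSet_Ioi).mono fun x hx => (hF_norm n x hx).le)
    ((ae_restrict_mem measurableSet_Ioi).mono fun x hx =>
      (hasSum_exp_series_mul_rpow_mul_exp u hx).summable)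
    ((integrableOn_rpow_mul_exp_mul_rpow_sub_mul hα0.le hα1 hu.le hv hh).congr_fun
      (fun x hx => (hasSum_exp_series_mul_rpow_mul_exp u hx).tsum_eq.symm) measurableSet_Ioi)
    ((ae_restrict_mem measurableSet_Ioi).mono fun x hx =>
      hasSum_exp_series_mul_rpow_mul_exp (-u) hx)
  simp only [hF_int] at hsum
  rw [← hsum.tsum_eq, tsum_mul_left]
end

section
/- For α > 1 and real u > 0, v > 0, h > 0: ∫_0^∞ x^{h-1} exp(-u x^α - v x) dx = (1/α) ∑_{n=0}^∞ ((-1)^n / n!) Γ((h+n)/α) v^n u^{-(h+n)/α}. -/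
open MeasureTheory Real

/-! Expand `exp (-v x) = ∑ (-v x)ⁿ / n!` and integrate termwise: the `n`-th term is a moment
`∫ x^(h+n-1) exp (-u x^α)`, which the substitution `t = u x^α` turns into
`u^(-(h+n)/α) Γ((h+n)/α) / α`. The interchange is justified by dominated convergence with the
majorant `x^(h-1) exp (-u x^α + |v| x)`, integrable because `α > 1` makes `u x^α / 2` eventually
dominate `|v| x`. -/

theorem Real.expSeries_div_hasSum_exp (x : ℝ) :
    HasSum (fun n : ℕ => x ^ n / n.factorial) (exp x) := by
  rw [Real.exp_eq_exp_ℝ]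
  exact NormedSpace.expSeries_div_hasSum_exp x

theorem exists_mul_le_add_mul_rpow {α u : ℝ} (hα : 1 < α) (hu : 0 < u) (c : ℝ) :
    ∃ C, ∀ x, 0 ≤ x → c * x ≤ C + u * x ^ α := by
  obtain ⟨R, hR⟩ := Filter.eventually_atTop.mp
    ((tendsto_rpow_atTop (sub_pos.mpr hα)).eventually_ge_atTop (c / u))
  refine ⟨|c| * max R 0, fun x hx => ?_⟩
  have hxα : 0 ≤ u * x ^ α := mul_nonneg hu.le (rpow_nonneg hx α)
  rcases le_or_gt x (max R 0) with hxR | hxR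
  · have : c * x ≤ |c| * max R 0 :=
      (mul_le_mul_of_nonneg_right (le_abs_self c) hx).trans
        (mul_le_mul_of_nonneg_left hxR (abs_nonneg c))
    linarith
  · have hx0 : 0 < x := (le_max_right R 0).trans_lt hxR
    have hpow : c / u ≤ x ^ (α - 1) := hR x ((le_max_left R 0).trans hxR.le)
    have : c * x ≤ u * x ^ α := by
      calc c * x = u * (c / u) * x := by field_simp
        _ ≤ u * x ^ (α - 1) * x := by gcongr
        _ = u * x ^ α := by rw [mul_assoc, ← rpow_add_one hx0.ne', sub_add_cancel]
    have : 0 ≤ |c| * max R 0 := by positivity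
    linarith

theorem integrableOn_rpow_mul_exp_neg_mul_rpow_mul_exp {α u s : ℝ} (hα : 1 < α) (hu : 0 < u)
    (hs : -1 < s) (c : ℝ) :
    IntegrableOn (fun x : ℝ => x ^ s * exp (-u * x ^ α) * exp (c * x)) (Set.Ioi 0) := by
  have hα0 : 0 < α := zero_lt_one.trans hα
  obtain ⟨C, hC⟩ := exists_mul_le_add_mul_rpow hα (half_pos hu) c
  have hdom := (integrableOn_rpow_mul_exp_neg_mul_rpow hs hα0 (half_pos hu)).const_mul (exp C)
  refine hdom.mono' ((integrableOn_rpow_mul_exp_neg_mul_rpow hs hα0 hu).aestronglyMeasurable.mul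
    (continuous_exp.comp (continuous_const.mul continuous_id)).aestronglyMeasurable) ?_
  refine (ae_restrict_iff' measurableSet_Ioi).mpr (Filter.Eventually.of_forall fun x hx => ?_)
  have hx0 : 0 ≤ x := le_of_lt hx
  have hexp : exp (-u * x ^ α) * exp (c * x) ≤ exp C * exp (-(u / 2) * x ^ α) := by
    rw [← exp_add, ← exp_add, exp_le_exp]
    linarith [hC x hx0]
  rw [norm_of_nonneg (by positivity), mul_assoc, mul_left_comm (exp C)]
  exact mul_le_mul_of_nonneg_left hexp (rpow_nonneg hx0 s)

theorem hasSum_integral_mul_pow_div_factorial {X : Type*} [MeasurableSpace X] {μ : Measure X}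
    {g φ : X → ℝ} (hg : AEStronglyMeasurable g μ) (hφ : AEStronglyMeasurable φ μ)
    (hint : Integrable (fun x => g x * exp |φ x|) μ) :
    HasSum (fun n : ℕ => ∫ x, g x * φ x ^ n / n.factorial ∂μ) (∫ x, g x * exp (φ x) ∂μ) := by
  refine hasSum_integral_of_dominated_convergence (fun n x => |g x| * (|φ x| ^ n / n.factorial))
    (fun n => by fun_prop) (fun n => ?_) ?_ ?_ ?_
  · refine Filter.Eventually.of_forall fun x => le_of_eq ?_
    rw [norm_div, norm_mul, norm_pow, Real.norm_eq_abs, Real.norm_eq_abs, RCLike.norm_natCast,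
      mul_div_assoc]
  · exact Filter.Eventually.of_forall fun x => (Real.summable_pow_div_factorial _).mul_left _
  · refine hint.norm.congr (Filter.Eventually.of_forall fun x => ?_)
    simp only [tsum_mul_left, (Real.expSeries_div_hasSum_exp _).tsum_eq, norm_mul,
      Real.norm_eq_abs, abs_exp]
  · refine Filter.Eventually.of_forall fun x => ?_
    simp only [mul_div_assoc]
    exact (Real.expSeries_div_hasSum_exp _).mul_left _

theorem integral_rpow_mul_exp_neg_mul_rpow_mul_pow {α u h : ℝ} (hα : 0 < α) (hu : 0 < u)
    (hh : 0 < h) (c : ℝ) (n : ℕ) :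
    ∫ x in Set.Ioi (0 : ℝ), x ^ (h - 1) * exp (-u * x ^ α) * (c * x) ^ n
      = c ^ n * (u ^ (-(h + n) / α) * (1 / α) * Gamma ((h + n) / α)) := by
  have hmoment : -1 < h + n - 1 := by linarith [(Nat.cast_nonneg n : (0 : ℝ) ≤ n)]
  calc ∫ x in Set.Ioi (0 : ℝ), x ^ (h - 1) * exp (-u * x ^ α) * (c * x) ^ n
      = ∫ x in Set.Ioi (0 : ℝ), c ^ n * (x ^ (h + n - 1) * exp (-u * x ^ α)) := by
        refine setIntegral_congr_fun measurableSet_Ioi fun x hx => ?_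
        rw [show h + n - 1 = (h - 1) + n by ring, rpow_add hx, rpow_natCast, mul_pow]
        ring
    _ = c ^ n * (u ^ (-(h + n) / α) * (1 / α) * Gamma ((h + n) / α)) := by
        rw [integral_const_mul, integral_rpow_mul_exp_neg_mul_rpow hα hmoment hu, sub_add_cancel]

theorem stmt_3_general (α u v h : ℝ) (hα : 1 < α) (hu : 0 < u) (hh : 0 < h) :
    ∫ x in Set.Ioi (0 : ℝ), x ^ (h - 1) * Real.exp (-u * x ^ α - v * x)
      = (1 / α) *
        ∑' n : ℕ, ((-1 : ℝ) ^ n / (n.factorial : ℝ)) * Real.Gamma ((h + n) / α)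
          * v ^ n * u ^ (-((h + n) / α)) := by
  have hα0 : 0 < α := zero_lt_one.trans hα
  have hint : IntegrableOn (fun x : ℝ => x ^ (h - 1) * exp (-u * x ^ α) * exp |-v * x|)
      (Set.Ioi 0) := by
    refine (integrableOn_rpow_mul_exp_neg_mul_rpow_mul_exp hα hu (show -1 < h - 1 by linarith) |v|).congr_fun
      (fun x hx => ?_) measurableSet_Ioi
    rw [abs_mul, abs_neg, abs_of_pos (show (0 : ℝ) < x from hx)]
  have hseries := hasSum_integral_mul_pow_div_factorial
    (integrableOn_rpow_mul_exp_neg_mul_rpow (show -1 < h - 1 by linarith) hα0 hu).aestronglyMeasurable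
    (continuous_const.mul continuous_id).aestronglyMeasurable hint
  calc ∫ x in Set.Ioi (0 : ℝ), x ^ (h - 1) * exp (-u * x ^ α - v * x)
      = ∫ x in Set.Ioi (0 : ℝ), x ^ (h - 1) * exp (-u * x ^ α) * exp (-v * x) := by
        simp only [sub_eq_add_neg, exp_add, neg_mul, mul_assoc]
    _ = ∑' n : ℕ, ∫ x in Set.Ioi (0 : ℝ), x ^ (h - 1) * exp (-u * x ^ α) * (-v * x) ^ n
          / n.factorial := hseries.tsum_eq.symm
    _ = _ := by
        rw [← tsum_mul_left]
        refine tsum_congr fun n => ?_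
        rw [integral_div, integral_rpow_mul_exp_neg_mul_rpow_mul_pow hα0 hu hh, neg_pow, neg_div]
        ring

/-- Lemma 1.2 for `α > 1`:
`∫_0^∞ x^{h-1} exp(-u x^α - v x) dx = (1/α) ∑ ((-1)^n/n!) Γ((h+n)/α) v^n u^{-(h+n)/α}`. -/
theorem stmt_3 (α u v h : ℝ) (hα : 1 < α) (hu : 0 < u) (hv : 0 < v) (hh : 0 < h) :
    ∫ x in Set.Ioi (0 : ℝ), x ^ (h - 1) * Real.exp (-u * x ^ α - v * x)
      = (1 / α) *
        ∑' n : ℕ, ((-1 : ℝ) ^ n / (n.factorial : ℝ)) * Real.Gamma ((h + n) / α)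
          * v ^ n * u ^ (-((h + n) / α)) :=
  stmt_3_general α u v h hα hu hh
end

section
/- For α > 0, β > 0 and z > 0 real: 𝕃_{α,β}(z) = α^{-1} z^{-β/α} 𝕃_{1/α, β/α}(z^{-1/α}), where for parameter γ > 1 the function 𝕃_{γ,δ}(w) is defined via the integral 𝕃_{γ,δ}(w) = ∫_0^∞ x^{δ-1} exp(-w x^γ - x) dx. -/
open MeasureTheory Real

/-- `𝕃_{α,β}` defined via the integral representation, for positive real parameters. -/
noncomputable def Lint (α β z : ℝ) : ℝ :=
  ∫ x in Set.Ioi (0 : ℝ), x ^ (β - 1) * Real.exp (-z * x ^ α - x)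

/-- Symmetry Lemma 1.1(a): for `α, β, z > 0`,
`𝕃_{α,β}(z) = α⁻¹ z^{-β/α} 𝕃_{1/α, β/α}(z^{-1/α})`. -/
theorem stmt_4 (α β z : ℝ) (hα : 0 < α) (hβ : 0 < β) (hz : 0 < z) :
    Lint α β z = α⁻¹ * z ^ (-(β / α)) * Lint (1 / α) (β / α) (z ^ (-(1 / α))) := by
  have hα0 : α ≠ 0 := hα.ne'
  set g : ℝ → ℝ := fun u => u ^ (β / α - 1) *
      Real.exp (-(z ^ (-(1 / α))) * u ^ (1 / α) - u) with hg
  set h : ℝ → ℝ := fun y => y ^ (β / α - 1) * Real.exp (-(y ^ (1 / α)) - z * y) with hh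
  -- step 1: unfold Lint(1/α, β/α, z^{-1/α}) and substitute u = z x
  have key1 : Lint (1 / α) (β / α) (z ^ (-(1 / α))) = z • ∫ x in Set.Ioi (0:ℝ), g (z * x) := by
    have := MeasureTheory.integral_comp_mul_left_Ioi g 0 hz
    rw [mul_zero] at this
    rw [Lint, this, smul_smul, mul_inv_cancel₀ hz.ne', one_smul]
  -- step 2: simplify the integrand g (z x)
  have key2 : ∀ x ∈ Set.Ioi (0:ℝ), g (z * x) = z ^ (β / α - 1) * h x := by
    intro x hx
    have hx0 : (0:ℝ) < x := hx
    simp only [hg, hh]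
    rw [Real.mul_rpow hz.le hx0.le, Real.mul_rpow hz.le hx0.le,
      Real.rpow_neg hz.le (1/α)]
    have hzz : z ^ (1/α) ≠ 0 := (Real.rpow_pos_of_pos hz _).ne'
    rw [show -(z ^ (1/α))⁻¹ * (z ^ (1/α) * x ^ (1/α)) = -(x ^ (1/α)) by
      field_simp]
    ring
  have key3 : (∫ x in Set.Ioi (0:ℝ), g (z * x)) = z ^ (β / α - 1) * ∫ x in Set.Ioi (0:ℝ), h x := by
    rw [← MeasureTheory.integral_const_mul]
    exact setIntegral_congr_fun measurableSet_Ioi key2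
  -- step 3: substitute x = y^α
  have key4 : (∫ x in Set.Ioi (0:ℝ), (α * x ^ (α - 1)) • h (x ^ α)) = ∫ y in Set.Ioi (0:ℝ), h y :=
    integral_comp_rpow_Ioi_of_pos hα
  have key5 : ∀ x ∈ Set.Ioi (0:ℝ), (α * x ^ (α - 1)) • h (x ^ α)
      = α * (x ^ (β - 1) * Real.exp (-z * x ^ α - x)) := by
    intro x hx
    have hx0 : (0:ℝ) < x := hx
    simp only [hh, smul_eq_mul]
    rw [← Real.rpow_mul hx0.le α (β/α - 1), ← Real.rpow_mul hx0.le α (1/α),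
      show α * (β/α - 1) = β - α by field_simp,
      show α * (1/α) = 1 by field_simp, Real.rpow_one,
      show α * x ^ (α-1) * (x ^ (β-α) * Real.exp (-x - z * x ^ α))
        = α * ((x ^ (α-1) * x ^ (β-α)) * Real.exp (-z * x ^ α - x)) by ring_nf,
      ← Real.rpow_add hx0, show α - 1 + (β - α) = β - 1 by ring]
  have key6 : (∫ y in Set.Ioi (0:ℝ), h y) = α * Lint α β z := by
    rw [← key4, Lint, ← MeasureTheory.integral_const_mul]
    exact setIntegral_congr_fun measurableSet_Ioi key5
  rw [key1, key3, key6, smul_eq_mul]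
  rw [show z ^ (β/α - 1) = z ^ (β/α) * z⁻¹ by
    rw [Real.rpow_sub hz, Real.rpow_one, div_eq_mul_inv], Real.rpow_neg hz.le]
  field_simp
end

section
/- For α > 1 and z > 0 real: 𝕃_{α,1}(z) = 1 - 𝕃_{1/α,1}(z^{-1/α}), where 𝕃_{α,1}(z) = ∫_0^∞ exp(-z x^α - x) dx and 𝕃_{1/α,1}(w) is given by its convergent power series ∑_{n≥0} (-1)^n Γ(n/α + 1) w^n / n!. -/
/-!
Substituting `x = w y` with `w = z^(-1/α)` turns the integral into `w ∫_0^∞ exp(-w y - y^α) dy`.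
Since `α > 1`, `exp(c y - y^α)` is integrable for every real `c`, so expanding `exp(c y)` and
integrating termwise is justified by dominated convergence, and the moments
`∫_0^∞ y^n exp(-y^α) dy = Γ((n+1)/α)/α` turn the integral into an entire power series in `c`.
At `c = -w`, the functional equation `Γ(s+1) = s Γ(s)` identifies `-w` times this series with
the tail `n ≥ 1` of the dual series, whose `n = 0` term is `1`.
-/

open MeasureTheory Real Set

lemma exists_mul_le_rpow_add {α : ℝ} (hα : 1 < α) (c : ℝ) :
    ∃ C, ∀ y, 0 ≤ y → c * y ≤ y ^ α + C := by
  refine ⟨|c| ^ conjExponent α / conjExponent α, fun y hy => ?_⟩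
  have hyoung := young_inequality y c (HolderConjugate.conjExponent hα)
  have hdiv : y ^ α / α ≤ y ^ α := div_le_self (rpow_nonneg hy _) hα.le
  rw [abs_of_nonneg hy] at hyoung
  linarith [mul_comm c y]

lemma integrableOn_exp_mul_sub_rpow {α : ℝ} (hα : 1 < α) (c : ℝ) :
    IntegrableOn (fun y => exp (c * y - y ^ α)) (Ioi 0) := by
  obtain ⟨C, hC⟩ := exists_mul_le_rpow_add hα (c + 1)
  have hdom : IntegrableOn (fun y => exp C * exp (-y)) (Ioi 0) := by
    have h := exp_neg_integrableOn_Ioi 0 one_pos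
    simp only [neg_mul, one_mul] at h
    exact h.const_mul _
  refine hdom.mono' (by fun_prop) ?_
  filter_upwards [ae_restrict_mem measurableSet_Ioi] with y hy
  rw [norm_of_nonneg (exp_pos _).le, ← exp_add, exp_le_exp]
  linarith [hC y hy.le]

lemma hasSum_pow_mul_exp_neg_rpow (α c y : ℝ) :
    HasSum (fun n : ℕ => c ^ n / n.factorial * (y ^ n * exp (-y ^ α)))
      (exp (c * y - y ^ α)) := by
  have hexp := NormedSpace.expSeries_div_hasSum_exp (c * y)
  rw [← exp_eq_exp_ℝ] at hexp
  rw [sub_eq_add_neg, exp_add]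
  refine (hexp.mul_right (exp (-y ^ α))).congr_fun fun n => ?_
  rw [mul_pow]
  ring

lemma integral_pow_mul_exp_neg_rpow {α : ℝ} (hα : 0 < α) (n : ℕ) :
    ∫ y in Ioi (0 : ℝ), y ^ n * exp (-y ^ α) = Gamma ((n + 1) / α) / α := by
  have := integral_rpow_mul_exp_neg_rpow hα (q := n) (by linarith [n.cast_nonneg (α := ℝ)])
  simpa only [rpow_natCast, one_div_mul_eq_div] using this

theorem hasSum_integral_exp_mul_sub_rpow {α : ℝ} (hα : 1 < α) (c : ℝ) :
    HasSum (fun n : ℕ => c ^ n / n.factorial * (Gamma ((n + 1) / α) / α))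
      (∫ y in Ioi (0 : ℝ), exp (c * y - y ^ α)) := by
  simp_rw [← integral_pow_mul_exp_neg_rpow (zero_lt_one.trans hα), ← integral_const_mul]
  refine hasSum_integral_of_dominated_convergence
    (fun n y => |c| ^ n / n.factorial * (y ^ n * exp (-y ^ α))) (fun n => by fun_prop)
    (fun n => ?_) (ae_of_all _ fun y => (hasSum_pow_mul_exp_neg_rpow α |c| y).summable) ?_
    (ae_of_all _ fun y => hasSum_pow_mul_exp_neg_rpow α c y)
  · filter_upwards [ae_restrict_mem measurableSet_Ioi] with y hy
    simp [abs_of_pos (show 0 < y from hy)]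
  · simp_rw [(hasSum_pow_mul_exp_neg_rpow α |c| _).tsum_eq]
    exact integrableOn_exp_mul_sub_rpow hα |c|

lemma integral_exp_neg_mul_rpow_sub_eq {α z : ℝ} (hα : α ≠ 0) (hz : 0 < z) :
    ∫ x in Ioi (0 : ℝ), exp (-z * x ^ α - x)
      = z ^ (-(1 / α)) * ∫ y in Ioi (0 : ℝ), exp (-z ^ (-(1 / α)) * y - y ^ α) := by
  set w := z ^ (-(1 / α))
  have hw : 0 < w := rpow_pos_of_pos hz _
  have hwα : z * w ^ α = 1 := by
    rw [← rpow_mul hz.le, neg_mul, one_div_mul_cancel hα, rpow_neg_one, mul_inv_cancel₀ hz.ne']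
  have hrescale : ∫ y in Ioi (0 : ℝ), exp (-w * y - y ^ α)
      = ∫ y in Ioi (0 : ℝ), exp (-z * (w * y) ^ α - w * y) := by
    refine setIntegral_congr_fun measurableSet_Ioi fun y (hy : 0 < y) => ?_
    rw [mul_rpow hw.le hy.le, ← mul_assoc, neg_mul, neg_mul, hwα]
    ring_nf
  rw [hrescale, integral_comp_mul_left_Ioi (fun x => exp (-z * x ^ α - x)) 0 hw, mul_zero,
    smul_eq_mul, mul_inv_cancel_left₀ hw.ne']

lemma Gamma_div_add_one_div_factorial_succ {α : ℝ} (hα : α ≠ 0) (n : ℕ) :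
    Gamma ((n + 1 : ℕ) / α + 1) / (n + 1).factorial = Gamma ((n + 1) / α) / α / n.factorial := by
  have hne : ((n : ℝ) + 1) / α ≠ 0 := div_ne_zero n.cast_add_one_ne_zero hα
  push_cast
  rw [Gamma_add_one hne, Nat.factorial_succ]
  push_cast
  field_simp

/-- Lemma 1.1(c), the stable-law duality: for `α > 1` and `z > 0`,
`∫_0^∞ exp(-z x^α - x) dx = 1 - ∑ (-1)^n Γ(n/α + 1) (z^{-1/α})^n / n!`. -/
theorem stmt_6 (α z : ℝ) (hα : 1 < α) (hz : 0 < z) :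
    ∫ x in Set.Ioi (0 : ℝ), Real.exp (-z * x ^ α - x)
      = 1 - ∑' n : ℕ,
          ((-1 : ℝ) ^ n * Real.Gamma ((n : ℝ) / α + 1) / (n.factorial : ℝ)) *
            (z ^ (-(1 / α))) ^ n := by
  have hα0 : α ≠ 0 := (zero_lt_one.trans hα).ne'
  set w := z ^ (-(1 / α))
  set I := ∫ y in Ioi (0 : ℝ), exp (-w * y - y ^ α)
  have hseries : HasSum (fun n : ℕ => ((-1 : ℝ) ^ n * Gamma (n / α + 1) / n.factorial) * w ^ n)
      (1 - w * I) := by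
    have hconst : (-1 : ℝ) ^ 0 * Gamma ((0 : ℕ) / α + 1) / (0 : ℕ).factorial * w ^ 0 = 1 := by
      simp
    rw [← hasSum_nat_add_iff' 1, Finset.sum_range_one, hconst, sub_sub_cancel_left]
    refine ((hasSum_integral_exp_mul_sub_rpow hα (-w)).mul_left w).neg.congr_fun fun n => ?_
    simp only [mul_div_assoc, Gamma_div_add_one_div_factorial_succ hα0]
    ring
  rw [integral_exp_neg_mul_rpow_sub_eq hα0 hz, hseries.tsum_eq]
  ring
end

section
/- For α < 0 and real u > 0, v > 0, h ∈ ℝ: the integral ∫_0^∞ x^{h-1} exp(-u x^α - v x) dx converges. -/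
open MeasureTheory Real

open scoped Nat

/-!
Since `α < 0`, the factor `exp (-u x^α)` beats every power of `x` as `x → 0+`: from
`y^N / N! ≤ exp y` we get `exp (-u x^α) ≤ (N! / u^N) x^(-αN)` for all `x > 0`, and for `N` large
`h - 1 - αN > -1`. The integrand is therefore dominated on `(0, ∞)` by a multiple of the
Gamma-type integrand `x^(h - 1 - αN) exp (-v x)`.
-/

lemma exp_neg_le_factorial_div_pow {y : ℝ} (hy : 0 < y) (n : ℕ) : exp (-y) ≤ n ! / y ^ n := by
  rw [exp_neg, inv_le_comm₀ (exp_pos y) (by positivity), inv_div]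
  exact pow_div_factorial_le_exp _ hy.le n

lemma exp_neg_mul_rpow_le {x u : ℝ} (hx : 0 < x) (hu : 0 < u) (α : ℝ) (n : ℕ) :
    exp (-u * x ^ α) ≤ n ! / u ^ n * x ^ (-(α * n)) := by
  have hux : 0 < u * x ^ α := mul_pos hu (rpow_pos_of_pos hx α)
  calc exp (-u * x ^ α) = exp (-(u * x ^ α)) := by rw [neg_mul]
    _ ≤ n ! / (u * x ^ α) ^ n := exp_neg_le_factorial_div_pow hux n
    _ = n ! / u ^ n * x ^ (-(α * n)) := by
      rw [mul_pow, ← rpow_natCast (x ^ α), ← rpow_mul hx.le, rpow_neg hx.le]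
      field_simp

lemma rpow_mul_exp_neg_mul_rpow_sub_mul_le {x u v : ℝ} (hx : 0 < x) (hu : 0 < u) (α s : ℝ)
    (n : ℕ) :
    x ^ s * exp (-u * x ^ α - v * x) ≤ n ! / u ^ n * (x ^ (s - α * n) * exp (-v * x)) := by
  rw [sub_eq_add_neg s, rpow_add hx, exp_sub, div_eq_mul_inv, ← exp_neg, ← neg_mul]
  calc x ^ s * (exp (-u * x ^ α) * exp (-v * x))
      ≤ x ^ s * (n ! / u ^ n * x ^ (-(α * n)) * exp (-v * x)) := by
        gcongr
        exact exp_neg_mul_rpow_le hx hu α n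
    _ = n ! / u ^ n * (x ^ s * x ^ (-(α * n)) * exp (-v * x)) := by ring

/-- For `α < 0` and `u, v > 0`, any `h ∈ ℝ`, the integral
`∫_0^∞ x^{h-1} exp(-u x^α - v x) dx` converges. -/
theorem stmt_7 (α u v h : ℝ) (hα : α < 0) (hu : 0 < u) (hv : 0 < v) :
    IntegrableOn (fun x : ℝ => x ^ (h - 1) * Real.exp (-u * x ^ α - v * x))
      (Set.Ioi (0 : ℝ)) := by
  obtain ⟨n, hn⟩ := exists_nat_gt (h / α)
  have hs : -1 < h - 1 - α * n := by
    have := (div_lt_iff_of_neg hα).mp hn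
    linarith
  have hdom : IntegrableOn (fun x : ℝ => n ! / u ^ n * (x ^ (h - 1 - α * n) * exp (-v * x)))
      (Set.Ioi 0) := by
    have := (integrableOn_rpow_mul_exp_neg_mul_rpow hs one_pos hv).const_mul (n ! / u ^ n)
    simp only [rpow_one] at this
    exact this
  refine hdom.mono' (by fun_prop) ?_
  filter_upwards [ae_restrict_mem measurableSet_Ioi] with x (hx : 0 < x)
  rw [Real.norm_of_nonneg (by positivity)]
  exact rpow_mul_exp_neg_mul_rpow_sub_mul_le hx hu α (h - 1) n
end

section
/- The expression α₂^{-1} y₂^{-(β₁+β₂-1)/α₂} 𝕃_{α₁/α₂,(β₁+β₂-1)/α₂}(y₁ y₂^{-α₁/α₂}) is symmetric under swapping (α₁,β₁,y₁) ↔ (α₂,β₂,y₂), for αᵢ, βᵢ, yᵢ > 0 with β₁+β₂ > 1 and α₁ ≠ α₂, where 𝕃 is defined by the integral 𝕃_{α,β}(z) = ∫_0^∞ x^{β-1} exp(-z x^α - x) dx. -/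
open MeasureTheory Real

lemma Lint_key (a b c d γ : ℝ) (ha : 0 < a) (hc : 0 < c) :
    a⁻¹ * c ^ (-(γ / a)) * Lint (b / a) (γ / a) (d * c ^ (-(b / a)))
      = ∫ t in Set.Ioi (0 : ℝ), t ^ (γ - 1) * Real.exp (-d * t ^ b - c * t ^ a) := by
  have ha' : a ≠ 0 := ha.ne'
  set f : ℝ → ℝ := fun x =>
    x ^ (γ / a - 1) * Real.exp (-(d * c ^ (-(b / a))) * x ^ (b / a) - x) with hf
  set k := c ^ a⁻¹ with hk
  have hk0 : 0 < k := Real.rpow_pos_of_pos hc _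
  have hka : k ^ a = c := by
    rw [hk, ← Real.rpow_mul hc.le, inv_mul_cancel₀ ha', Real.rpow_one]
  have h1 : Lint (b / a) (γ / a) (d * c ^ (-(b / a)))
      = ∫ x in Set.Ioi (0 : ℝ), (|a| * x ^ (a - 1)) • f (x ^ a) :=
    (integral_comp_rpow_Ioi f ha').symm
  have h2 : (∫ x in Set.Ioi (0 : ℝ), (|a| * x ^ (a - 1)) • f (x ^ a))
      = k * ∫ t in Set.Ioi (0 : ℝ), (|a| * (k * t) ^ (a - 1)) • f ((k * t) ^ a) := by
    rw [integral_comp_mul_left_Ioi (fun x => (|a| * x ^ (a - 1)) • f (x ^ a)) 0 hk0,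
      mul_zero, smul_eq_mul, ← mul_assoc, mul_inv_cancel₀ hk0.ne', one_mul]
  rw [h1, h2]
  rw [show a⁻¹ * c ^ (-(γ / a)) *
      (k * ∫ t in Set.Ioi (0 : ℝ), (|a| * (k * t) ^ (a - 1)) • f ((k * t) ^ a))
    = ∫ t in Set.Ioi (0 : ℝ),
      (a⁻¹ * c ^ (-(γ / a)) * k) * ((|a| * (k * t) ^ (a - 1)) • f ((k * t) ^ a)) by
      rw [MeasureTheory.integral_const_mul]; ring]
  apply MeasureTheory.setIntegral_congr_fun measurableSet_Ioi
  intro t ht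
  have ht0 : (0 : ℝ) < t := ht
  have hta : (0 : ℝ) < t ^ a := Real.rpow_pos_of_pos ht0 a
  have h3 : (k * t) ^ a = c * t ^ a := by rw [Real.mul_rpow hk0.le ht0.le, hka]
  have h4 : (k * t) ^ (a - 1) = k ^ (a - 1) * t ^ (a - 1) := Real.mul_rpow hk0.le ht0.le
  have e1 : (c * t ^ a) ^ (γ / a - 1) = c ^ (γ / a - 1) * t ^ (γ - a) := by
    rw [Real.mul_rpow hc.le hta.le, ← Real.rpow_mul ht0.le,
      show a * (γ / a - 1) = γ - a by field_simp]
  have e2 : (c * t ^ a) ^ (b / a) = c ^ (b / a) * t ^ b := by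
    rw [Real.mul_rpow hc.le hta.le, ← Real.rpow_mul ht0.le,
      show a * (b / a) = b by field_simp]
  have e3 : c ^ (-(b / a)) * c ^ (b / a) = 1 := by
    rw [← Real.rpow_add hc, neg_add_cancel, Real.rpow_zero]
  have e4 : k * k ^ (a - 1) = c := by
    rw [← hka]; nth_rewrite 1 [← Real.rpow_one k]
    rw [← Real.rpow_add hk0]; ring_nf
  have e5 : c ^ (-(γ / a)) * c ^ (γ / a - 1) = c⁻¹ := by
    rw [← Real.rpow_add hc, show -(γ / a) + (γ / a - 1) = -1 by ring, Real.rpow_neg_one]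
  have e6 : t ^ (a - 1) * t ^ (γ - a) = t ^ (γ - 1) := by
    rw [← Real.rpow_add ht0]; ring_nf
  simp only [smul_eq_mul, hf, h3, h4, e1, e2, abs_of_pos ha]
  have harg : -(d * c ^ (-(b / a))) * (c ^ (b / a) * t ^ b) - c * t ^ a
      = -d * t ^ b - c * t ^ a := by
    have : d * c ^ (-(b / a)) * (c ^ (b / a) * t ^ b) = d * t ^ b := by
      calc d * c ^ (-(b / a)) * (c ^ (b / a) * t ^ b)
          = d * (c ^ (-(b / a)) * c ^ (b / a)) * t ^ b := by ring
        _ = d * t ^ b := by rw [e3]; ring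
    linarith [this]
  rw [harg]
  calc a⁻¹ * c ^ (-(γ / a)) * k *
        (a * (k ^ (a - 1) * t ^ (a - 1)) *
          (c ^ (γ / a - 1) * t ^ (γ - a) * Real.exp (-d * t ^ b - c * t ^ a)))
      = (a⁻¹ * a) * ((c ^ (-(γ / a)) * c ^ (γ / a - 1)) * (k * k ^ (a - 1))) *
        (t ^ (a - 1) * t ^ (γ - a)) * Real.exp (-d * t ^ b - c * t ^ a) := by ring
    _ = t ^ (γ - 1) * Real.exp (-d * t ^ b - c * t ^ a) := by
        rw [inv_mul_cancel₀ ha', e4, e5, e6, inv_mul_cancel₀ hc.ne']; ring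

/-- The expression `α₂⁻¹ y₂^{-(β₁+β₂-1)/α₂} 𝕃_{α₁/α₂,(β₁+β₂-1)/α₂}(y₁ y₂^{-α₁/α₂})`
is symmetric under `(α₁,β₁,y₁) ↔ (α₂,β₂,y₂)`. -/
theorem stmt_9 (α₁ α₂ β₁ β₂ y₁ y₂ : ℝ)
    (hα₁ : 0 < α₁) (hα₂ : 0 < α₂) (hne : α₁ ≠ α₂)
    (hβ₁ : 0 < β₁) (hβ₂ : 0 < β₂) (hβ : 1 < β₁ + β₂)
    (hy₁ : 0 < y₁) (hy₂ : 0 < y₂) :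
    α₂⁻¹ * y₂ ^ (-((β₁ + β₂ - 1) / α₂)) *
        Lint (α₁ / α₂) ((β₁ + β₂ - 1) / α₂) (y₁ * y₂ ^ (-(α₁ / α₂)))
      = α₁⁻¹ * y₁ ^ (-((β₁ + β₂ - 1) / α₁)) *
        Lint (α₂ / α₁) ((β₁ + β₂ - 1) / α₁) (y₂ * y₁ ^ (-(α₂ / α₁))) := by
  rw [Lint_key α₂ α₁ y₂ y₁ (β₁ + β₂ - 1) hα₂ hy₂,
    Lint_key α₁ α₂ y₁ y₂ (β₁ + β₂ - 1) hα₁ hy₁]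
  apply MeasureTheory.setIntegral_congr_fun measurableSet_Ioi
  intro t ht
  dsimp only
  rw [show -y₁ * t ^ α₁ - y₂ * t ^ α₂ = -y₂ * t ^ α₂ - y₁ * t ^ α₁ by ring]
end

section
/- Let f ∈ 𝒮(ℝ₊) (smooth on [0,∞), all derivatives vanish at 0, rapidly decreasing with all derivatives) and let F(p) = ∫_0^∞ f(x) e^{-px} dx be its Laplace transform. Then for every N > 0 and k ≥ 0, there is M such that |F^{(k)}(p)| ≤ M(1+|p|)^{-N} for all p with Re p ≥ 0. -/
open Complex MeasureTheory Set Filter Topology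

noncomputable def Lap (f : ℝ → ℂ) (p : ℂ) : ℂ := ∫ x in Ioi (0:ℝ), f x * Complex.exp (-p * x)

noncomputable def mneg (f : ℝ → ℂ) : ℝ → ℂ := fun x => -(x:ℂ) * f x

/-- Schwartz-type class on `ℝ₊`. -/
def LapS (f : ℝ → ℂ) : Prop :=
  ContDiff ℝ (⊤:ℕ∞) f ∧ (∀ k : ℕ, iteratedDeriv k f 0 = 0) ∧
    ∀ k N : ℕ, ∃ C : ℝ, ∀ x : ℝ, 0 ≤ x → x ^ N * ‖iteratedDeriv k f x‖ ≤ C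

lemma LapS.deriv {f : ℝ → ℂ} (hf : LapS f) : LapS (deriv f) := by
  obtain ⟨h1, h2, h3⟩ := hf
  refine ⟨(contDiff_infty_iff_deriv.mp h1).2, fun k => ?_, fun k N => ?_⟩
  · rw [← iteratedDeriv_succ']; exact h2 (k+1)
  · obtain ⟨C, hC⟩ := h3 (k+1) N
    exact ⟨C, fun x hx => by rw [← iteratedDeriv_succ']; exact hC x hx⟩

lemma LapS.iteratedDeriv {f : ℝ → ℂ} (hf : LapS f) (n : ℕ) : LapS (iteratedDeriv n f) := by
  induction n with
  | zero => simpa using hf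
  | succ n ih => rw [iteratedDeriv_succ]; exact ih.deriv

lemma LapS.cont {f : ℝ → ℂ} (hf : LapS f) : Continuous f := hf.1.continuous

/-- a uniform two-sided style decay bound with `1+x^2`. -/
lemma LapS.bound2 {f : ℝ → ℂ} (hf : LapS f) : ∃ C : ℝ, 0 ≤ C ∧ ∀ x : ℝ, 0 ≤ x →
    ‖f x‖ ≤ C / (1 + x ^ 2) := by
  obtain ⟨C0, h0⟩ := hf.2.2 0 0
  obtain ⟨C2, h2⟩ := hf.2.2 0 2
  have hC0 : 0 ≤ C0 := le_trans (norm_nonneg (_root_.iteratedDeriv 0 f 0)) (by simpa using h0 0 le_rfl)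
  have hC2 : 0 ≤ C2 := le_trans (by simp) (h2 0 le_rfl)
  refine ⟨C0 + C2, by linarith, fun x hx => ?_⟩
  rw [div_eq_inv_mul, ← inv_mul_le_iff₀ (by positivity), inv_inv, add_mul, one_mul]
  have := h0 x hx; have := h2 x hx
  simp only [iteratedDeriv_zero, pow_zero, one_mul] at *
  linarith

lemma norm_exp_le_one {p : ℂ} (hp : 0 ≤ p.re) {x : ℝ} (hx : 0 ≤ x) :
    ‖Complex.exp (-p * x)‖ ≤ 1 := by
  rw [Complex.norm_exp]
  simp only [neg_mul, neg_re, mul_re, ofReal_re, ofReal_im, mul_zero, sub_zero]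
  exact Real.exp_le_one_iff.mpr (by nlinarith)

lemma LapS.integrableOn_norm {f : ℝ → ℂ} (hf : LapS f) :
    IntegrableOn (fun x : ℝ => ‖f x‖) (Ioi 0) := by
  obtain ⟨C, hCpos, hC⟩ := hf.bound2
  refine Integrable.mono (g := fun x => C / (1 + x ^ 2)) ?_ ?_ ?_
  · exact (integrable_inv_one_add_sq.const_mul C).integrableOn.congr_fun
      (fun x _ => by rw [div_eq_mul_inv]) measurableSet_Ioi |>.congr_fun (fun x _ => rfl) measurableSet_Ioi
  · exact (hf.cont.norm.aestronglyMeasurable).restrict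
  · filter_upwards [ae_restrict_mem measurableSet_Ioi] with x hx
    rw [norm_norm, Real.norm_eq_abs, _root_.abs_of_nonneg (by positivity)]
    exact hC x (le_of_lt hx)

lemma LapS.integrableOn_exp {f : ℝ → ℂ} (hf : LapS f) {p : ℂ} (hp : 0 ≤ p.re) :
    IntegrableOn (fun x : ℝ => f x * Complex.exp (-p * x)) (Ioi 0) := by
  refine Integrable.mono (g := fun x : ℝ => ‖f x‖) hf.integrableOn_norm ?_ ?_
  · exact ((hf.cont.aestronglyMeasurable).restrict.mul
      ((Complex.continuous_exp.comp (by continuity)).aestronglyMeasurable.restrict))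
  · filter_upwards [ae_restrict_mem measurableSet_Ioi] with x hx
    rw [norm_mul, Real.norm_eq_abs, abs_norm]
    calc ‖f x‖ * ‖Complex.exp (-p * x)‖ ≤ ‖f x‖ * 1 :=
      mul_le_mul_of_nonneg_left (norm_exp_le_one hp hx.le) (norm_nonneg _)
    _ = ‖f x‖ := mul_one _

lemma hasDerivAt_itd {f : ℝ → ℂ} (hf : ContDiff ℝ (⊤:ℕ∞) f) (j : ℕ) (x : ℝ) :
    HasDerivAt (iteratedDeriv j f) (iteratedDeriv (j+1) f x) x := by
  have h1 : Differentiable ℝ (iteratedDeriv j f) :=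
    hf.differentiable_iteratedDeriv j (by exact_mod_cast WithTop.coe_lt_top _)
  rw [iteratedDeriv_succ]
  exact (h1 x).hasDerivAt

lemma itd_mneg {f : ℝ → ℂ} (hf : ContDiff ℝ (⊤:ℕ∞) f) :
    ∀ (k : ℕ) (x : ℝ), iteratedDeriv k (mneg f) x
      = -(x:ℂ) * iteratedDeriv k f x - k * iteratedDeriv (k-1) f x := by
  intro k
  induction k with
  | zero => intro x; simp [mneg]
  | succ k ih =>
    intro x
    have heq : iteratedDeriv k (mneg f) =
        fun x : ℝ => -(x:ℂ) * iteratedDeriv k f x - k * iteratedDeriv (k-1) f x := funext ih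
    rw [iteratedDeriv_succ, heq]
    have h1 : HasDerivAt (fun x : ℝ => -(x:ℂ) * iteratedDeriv k f x)
        (-1 * iteratedDeriv k f x + -(x:ℂ) * iteratedDeriv (k+1) f x) x := by
      simpa using (show HasDerivAt (fun y : ℝ => -(y:ℂ) * iteratedDeriv k f y) _ x from
        (Complex.ofRealCLM.hasDerivAt (x := x)).neg.mul (hasDerivAt_itd hf k x))
    have h2 : HasDerivAt (fun x : ℝ => (k:ℂ) * iteratedDeriv (k-1) f x)
        ((k:ℂ) * iteratedDeriv k f x) x := by
      cases k with
      | zero => simpa using hasDerivAt_const x (0:ℂ)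
      | succ m => simpa using (hasDerivAt_itd hf m _).const_mul ((m+1:ℕ):ℂ)
    have h3 : deriv (fun x : ℝ => -(x:ℂ) * iteratedDeriv k f x - k * iteratedDeriv (k-1) f x) x = _ :=
      (h1.sub h2).deriv
    rw [h3]
    push_cast
    ring

lemma LapS.mneg {f : ℝ → ℂ} (hf : LapS f) : LapS (_root_.mneg f) := by
  obtain ⟨h1, h2, h3⟩ := hf
  refine ⟨?_, fun k => ?_, fun k N => ?_⟩
  · exact (Complex.ofRealCLM.contDiff.neg.mul h1 :)
  · rw [itd_mneg h1 k 0]; simp [h2]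
  · obtain ⟨C1, hC1⟩ := h3 k (N+1)
    obtain ⟨C2, hC2⟩ := h3 (k-1) N
    refine ⟨C1 + k * C2, fun x hx => ?_⟩
    rw [itd_mneg h1 k x]
    have hb : ‖-(x:ℂ) * _root_.iteratedDeriv k f x - k * _root_.iteratedDeriv (k-1) f x‖
        ≤ x * ‖_root_.iteratedDeriv k f x‖ + k * ‖_root_.iteratedDeriv (k-1) f x‖ := by
      refine (norm_sub_le _ _).trans ?_
      have e1 : ‖-(x:ℂ) * _root_.iteratedDeriv k f x‖ = x * ‖_root_.iteratedDeriv k f x‖ := by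
        rw [norm_mul, norm_neg, Complex.norm_real, Real.norm_eq_abs, _root_.abs_of_nonneg hx]
      have e2 : ‖(k:ℂ) * _root_.iteratedDeriv (k-1) f x‖ = k * ‖_root_.iteratedDeriv (k-1) f x‖ := by
        rw [norm_mul, Complex.norm_natCast]
      rw [e1, e2]
    calc x ^ N * ‖-(x:ℂ) * _root_.iteratedDeriv k f x - k * _root_.iteratedDeriv (k-1) f x‖
        ≤ x ^ N * (x * ‖_root_.iteratedDeriv k f x‖ + k * ‖_root_.iteratedDeriv (k-1) f x‖) := by
          exact mul_le_mul_of_nonneg_left hb (by positivity)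
      _ = x ^ (N+1) * ‖_root_.iteratedDeriv k f x‖ + k * (x ^ N * ‖_root_.iteratedDeriv (k-1) f x‖) := by ring
      _ ≤ C1 + k * C2 := by
          have := hC1 x hx; have := hC2 x hx
          have hk : (0:ℝ) ≤ k := Nat.cast_nonneg k
          nlinarith

lemma LapS.mneg_iter {f : ℝ → ℂ} (hf : LapS f) (k : ℕ) : LapS (_root_.mneg^[k] f) := by
  induction k with
  | zero => simpa using hf
  | succ k ih => rw [Function.iterate_succ_apply']; exact ih.mneg

lemma hasDerivAt_mul_exp (f : ℝ → ℂ) (hf : Differentiable ℝ f) (p : ℂ) (x : ℝ) :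
    HasDerivAt (fun x : ℝ => f x * Complex.exp (-p * x))
      (deriv f x * Complex.exp (-p * x) + (f x * Complex.exp (-p * x)) * (-p)) x := by
  have h1 : HasDerivAt (fun t : ℝ => Complex.exp (-p * t)) (Complex.exp (-p * x) * (-p)) x := by
    have h0 : HasDerivAt (fun t : ℝ => -p * (t : ℂ)) (-p) x := by
      simpa using (Complex.ofRealCLM.hasDerivAt (x := x)).const_mul (-p)
    simpa using h0.cexp
  have : HasDerivAt (fun x : ℝ => f x * Complex.exp (-p * x)) _ x := ((hf x).hasDerivAt.mul h1)
  convert this using 1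
  ring

lemma lap_tendsto_zero {f : ℝ → ℂ} (hf : LapS f) {p : ℂ} (hp : 0 ≤ p.re) :
    Tendsto (fun x : ℝ => f x * Complex.exp (-p * x)) atTop (𝓝 0) := by
  obtain ⟨C, hC⟩ := hf.2.2 0 1
  refine squeeze_zero_norm' (a := fun x : ℝ => C / x) ?_ ?_
  · filter_upwards [eventually_gt_atTop 0] with x hx
    rw [norm_mul]
    have h1 : ‖f x‖ ≤ C / x := by
      rw [le_div_iff₀ hx]
      have := hC x hx.le
      simpa [iteratedDeriv_zero, mul_comm] using this
    calc ‖f x‖ * ‖Complex.exp (-p * x)‖ ≤ ‖f x‖ * 1 :=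
      mul_le_mul_of_nonneg_left (norm_exp_le_one hp hx.le) (norm_nonneg _)
    _ = ‖f x‖ := mul_one _
    _ ≤ C / x := h1
  · exact tendsto_const_nhds.div_atTop tendsto_id

lemma lap_ibp {f : ℝ → ℂ} (hf : LapS f) {p : ℂ} (hp : 0 ≤ p.re) :
    Lap (deriv f) p = p * Lap f p := by
  have hdiff : Differentiable ℝ f := hf.1.differentiable (by simp)
  have hint1 : IntegrableOn (fun x : ℝ => deriv f x * Complex.exp (-p * x)) (Ioi 0) :=
    hf.deriv.integrableOn_exp hp
  have hint2 : IntegrableOn (fun x : ℝ => (f x * Complex.exp (-p * x)) * (-p)) (Ioi 0) :=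
    (hf.integrableOn_exp hp).mul_const (-p)
  have key := integral_Ioi_of_hasDerivAt_of_tendsto (a := (0:ℝ))
    (f := fun x : ℝ => f x * Complex.exp (-p * x))
    (f' := fun x : ℝ => deriv f x * Complex.exp (-p * x) + (f x * Complex.exp (-p * x)) * (-p))
    ((hdiff.continuous.mul (Complex.continuous_exp.comp (by continuity))).continuousWithinAt)
    (fun x _ => hasDerivAt_mul_exp f hdiff p x)
    (hint1.add hint2) (lap_tendsto_zero hf hp)
  have hf0 : f 0 = 0 := by simpa [iteratedDeriv_zero] using hf.2.1 0
  rw [integral_add hint1 hint2] at key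
  simp only [hf0, ofReal_zero, mul_zero, neg_zero, Complex.exp_zero, zero_mul, mul_one,
    zero_sub, neg_zero, sub_zero] at key
  rw [integral_mul_const] at key
  have : (∫ x in Ioi (0:ℝ), deriv f x * Complex.exp (-p * x))
      = - ((∫ x in Ioi (0:ℝ), f x * Complex.exp (-p * x)) * (-p)) := by
    linear_combination key
  rw [Lap, Lap, this]; ring

lemma lap_pow {f : ℝ → ℂ} (hf : LapS f) {p : ℂ} (hp : 0 ≤ p.re) (N : ℕ) :
    Lap (iteratedDeriv N f) p = p ^ N * Lap f p := by
  induction N with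
  | zero => simp [iteratedDeriv_zero]
  | succ N ih =>
    rw [iteratedDeriv_succ, lap_ibp (hf.iteratedDeriv N) hp, ih, pow_succ]
    ring

lemma lap_norm_le {f : ℝ → ℂ} (hf : LapS f) {p : ℂ} (hp : 0 ≤ p.re) :
    ‖Lap f p‖ ≤ ∫ x in Ioi (0:ℝ), ‖f x‖ := by
  refine norm_integral_le_of_norm_le hf.integrableOn_norm ?_
  filter_upwards [ae_restrict_mem measurableSet_Ioi] with x hx
  calc ‖f x * Complex.exp (-p * x)‖ = ‖f x‖ * ‖Complex.exp (-p * x)‖ := norm_mul _ _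
  _ ≤ ‖f x‖ * 1 := mul_le_mul_of_nonneg_left (norm_exp_le_one hp hx.out.le) (norm_nonneg _)
  _ = ‖f x‖ := mul_one _

lemma one_add_pow_le (a : ℝ) (ha : 0 ≤ a) (N : ℕ) : (1 + a) ^ N ≤ 2 ^ N * (1 + a ^ N) := by
  rcases le_total a 1 with h | h
  · calc (1 + a) ^ N ≤ 2 ^ N := pow_le_pow_left₀ (by linarith) (by linarith) N
    _ ≤ 2 ^ N * (1 + a ^ N) := by nlinarith [pow_nonneg ha N, pow_nonneg (zero_le_two (α := ℝ)) N]
  · calc (1 + a) ^ N ≤ (2 * a) ^ N := pow_le_pow_left₀ (by linarith) (by linarith) N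
    _ = 2 ^ N * a ^ N := mul_pow 2 a N
    _ ≤ 2 ^ N * (1 + a ^ N) := by nlinarith [pow_nonneg (zero_le_two (α := ℝ)) N]

lemma lap_decay {f : ℝ → ℂ} (hf : LapS f) (N : ℕ) :
    ∃ M : ℝ, 0 ≤ M ∧ ∀ p : ℂ, 0 ≤ p.re → ‖Lap f p‖ ≤ M * (1 + ‖p‖) ^ (-(N:ℝ)) := by
  set C0 : ℝ := ∫ x in Ioi (0:ℝ), ‖f x‖ with hC0
  set CN : ℝ := ∫ x in Ioi (0:ℝ), ‖_root_.iteratedDeriv N f x‖ with hCN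
  refine ⟨2 ^ N * (C0 + CN), ?_, fun p hp => ?_⟩
  · have h0 : 0 ≤ C0 := integral_nonneg fun x => norm_nonneg _
    have h1 : 0 ≤ CN := integral_nonneg fun x => norm_nonneg _
    positivity
  have h1 : ‖Lap f p‖ ≤ C0 := lap_norm_le hf hp
  have h2 : ‖p‖ ^ N * ‖Lap f p‖ ≤ CN := by
    rw [← norm_pow, ← norm_mul, ← lap_pow hf hp N]
    exact lap_norm_le (hf.iteratedDeriv N) hp
  have hbase : (0:ℝ) < 1 + ‖p‖ := by positivity
  have hrw : (1 + ‖p‖) ^ (-(N:ℝ)) = ((1 + ‖p‖) ^ N)⁻¹ := by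
    rw [Real.rpow_neg hbase.le, Real.rpow_natCast]
  rw [hrw, ← div_eq_mul_inv, le_div_iff₀ (by positivity)]
  calc ‖Lap f p‖ * (1 + ‖p‖) ^ N ≤ ‖Lap f p‖ * (2 ^ N * (1 + ‖p‖ ^ N)) :=
    mul_le_mul_of_nonneg_left (one_add_pow_le _ (norm_nonneg p) N) (norm_nonneg _)
  _ = 2 ^ N * (‖Lap f p‖ + ‖p‖ ^ N * ‖Lap f p‖) := by ring
  _ ≤ 2 ^ N * (C0 + CN) := by
    have := mul_le_mul_of_nonneg_left (add_le_add h1 h2) (by positivity : (0:ℝ) ≤ 2 ^ N)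
    linarith

lemma aesm_exp (f : ℝ → ℂ) (hf : Continuous f) (q : ℂ) :
    AEStronglyMeasurable (fun x : ℝ => f x * Complex.exp (-q * x))
      (volume.restrict (Ioi 0)) :=
  (hf.mul (Complex.continuous_exp.comp (by continuity))).aestronglyMeasurable.restrict

lemma lap_hasDerivAt {f : ℝ → ℂ} (hf : LapS f) {p : ℂ} (hp : 0 < p.re) :
    HasDerivAt (Lap f) (Lap (mneg f) p) p := by
  have hmain := hasDerivAt_integral_of_dominated_loc_of_deriv_le
    (μ := volume.restrict (Ioi (0:ℝ))) (x₀ := p)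
    (F := fun q (x : ℝ) => f x * Complex.exp (-q * x))
    (F' := fun q (x : ℝ) => mneg f x * Complex.exp (-q * x))
    (bound := fun x : ℝ => ‖mneg f x‖)
    (s := Metric.ball p (p.re / 2)) (Metric.ball_mem_nhds p (by positivity))
    (Eventually.of_forall fun q => aesm_exp f hf.cont q)
    (hf.integrableOn_exp hp.le)
    (aesm_exp (mneg f) hf.mneg.cont p)
    ?_ hf.mneg.integrableOn_norm ?_
  · exact hmain.2
  · filter_upwards [ae_restrict_mem measurableSet_Ioi] with x hx q hq
    have hqre : 0 ≤ q.re := by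
      have h1 : |q.re - p.re| ≤ ‖q - p‖ := by
        rw [← Complex.sub_re]; exact Complex.abs_re_le_norm _
      have h2 : ‖q - p‖ < p.re / 2 := by simpa [Metric.mem_ball, dist_eq_norm] using hq
      have := abs_sub_lt_iff.mp (h1.trans_lt h2)
      linarith [this.2]
    rw [norm_mul]
    calc ‖mneg f x‖ * ‖Complex.exp (-q * x)‖ ≤ ‖mneg f x‖ * 1 :=
      mul_le_mul_of_nonneg_left (norm_exp_le_one hqre hx.out.le) (norm_nonneg _)
    _ = ‖mneg f x‖ := mul_one _
  · filter_upwards [ae_restrict_mem measurableSet_Ioi] with x _ q _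
    have h0 : HasDerivAt (fun q : ℂ => -q * (x:ℂ)) (-(x:ℂ)) q := by
      simpa using (hasDerivAt_id q).neg.mul_const (x:ℂ)
    have h1 : HasDerivAt (fun q : ℂ => f x * Complex.exp (-q * x)) _ q := (h0.cexp).const_mul (f x)
    refine h1.congr_deriv ?_
    simp [mneg]; ring

lemma lap_itd_interior {f : ℝ → ℂ} (hf : LapS f) (k : ℕ) :
    ∀ p : ℂ, 0 < p.re → iteratedDeriv k (Lap f) p = Lap (mneg^[k] f) p := by
  induction k with
  | zero => intro p _; simp
  | succ k ih =>
    intro p hp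
    rw [iteratedDeriv_succ]
    have hev : iteratedDeriv k (Lap f) =ᶠ[𝓝 p] Lap (mneg^[k] f) := by
      have hopen : IsOpen {q : ℂ | 0 < q.re} := isOpen_lt continuous_const Complex.continuous_re
      filter_upwards [hopen.mem_nhds hp] with q hq using ih q hq
    rw [hev.deriv_eq, (lap_hasDerivAt (hf.mneg_iter k) hp).deriv,
      ← Function.iterate_succ_apply' mneg k f]

lemma norm_mneg (g : ℝ → ℂ) {x : ℝ} (hx : 0 ≤ x) : ‖mneg g x‖ = x * ‖g x‖ := by
  rw [mneg, norm_mul, norm_neg, Complex.norm_real, Real.norm_eq_abs, _root_.abs_of_nonneg hx]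

lemma lap_cont_ray {g : ℝ → ℂ} (hg : LapS g) {p : ℂ} (hp : p.re = 0) :
    Tendsto (fun t : ℝ => Lap g (p + t)) (𝓝[>] (0:ℝ)) (𝓝 (Lap g p)) := by
  have key := tendsto_integral_filter_of_dominated_convergence (μ := volume.restrict (Ioi 0))
    (F := fun (t : ℝ) (x : ℝ) => g x * Complex.exp (-(p + t) * x))
    (f := fun x : ℝ => g x * Complex.exp (-p * x))
    (bound := fun x : ℝ => ‖g x‖) (l := 𝓝[>] (0:ℝ))
    (Eventually.of_forall fun t => aesm_exp g hg.cont _)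
    ?_ hg.integrableOn_norm ?_
  · exact key
  · filter_upwards [self_mem_nhdsWithin] with t ht
    filter_upwards [ae_restrict_mem measurableSet_Ioi] with x hx
    have hre : 0 ≤ (p + (t:ℂ)).re := by simp [hp]; exact le_of_lt ht
    rw [norm_mul]
    calc ‖g x‖ * ‖Complex.exp (-(p + t) * x)‖ ≤ ‖g x‖ * 1 :=
      mul_le_mul_of_nonneg_left (norm_exp_le_one hre hx.out.le) (norm_nonneg _)
    _ = ‖g x‖ := mul_one _
  · refine Eventually.of_forall fun x => ?_
    have hc : Continuous (fun t : ℝ => g x * Complex.exp (-(p + t) * x)) := by continuity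
    have h0 := (hc.tendsto 0).mono_left (nhdsWithin_le_nhds (s := Ioi (0:ℝ)))
    simpa using h0

lemma one_sub_exp_le (u : ℝ) : 1 - Real.exp (-u) ≤ u := by
  have := Real.add_one_le_exp (-u); linarith

lemma exp_diff_quot_bound {p : ℂ} (hp : p.re = 0) {t x : ℝ} (ht : 0 < t) (hx : 0 < x) :
    ‖(Complex.exp (-(p + t) * x) - Complex.exp (-p * x)) / t‖ ≤ x := by
  have h1 : Complex.exp (-(p + t) * x) - Complex.exp (-p * x)
      = Complex.exp (-p * x) * (Complex.exp (-(t:ℂ) * x) - 1) := by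
    rw [mul_sub, ← Complex.exp_add, mul_one]
    ring_nf
  have h2 : ‖Complex.exp (-p * x)‖ = 1 := by
    rw [Complex.norm_exp]
    simp [hp]
  have h3 : ‖Complex.exp (-(t:ℂ) * x) - 1‖ = 1 - Real.exp (-(t * x)) := by
    have he : Complex.exp (-(t:ℂ) * x) = ((Real.exp (-(t * x)) : ℝ) : ℂ) := by
      rw [Complex.ofReal_exp]; push_cast; ring_nf
    rw [he, ← Complex.ofReal_one, ← Complex.ofReal_sub, Complex.norm_real, Real.norm_eq_abs,
      abs_of_nonpos (by simp [Real.exp_le_one_iff]; positivity), neg_sub]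
  rw [norm_div, h1, norm_mul, h2, h3, one_mul, Complex.norm_real, Real.norm_eq_abs,
    _root_.abs_of_nonneg ht.le, div_le_iff₀ ht]
  calc 1 - Real.exp (-(t * x)) ≤ t * x := one_sub_exp_le (t * x)
  _ = x * t := mul_comm _ _

lemma exp_slope_tendsto (p : ℂ) (x : ℝ) :
    Tendsto (fun t : ℝ => (Complex.exp (-(p + t) * x) - Complex.exp (-p * x)) / t)
      (𝓝[>] (0:ℝ)) (𝓝 (-(x:ℂ) * Complex.exp (-p * x))) := by
  have h0 : HasDerivAt (fun t : ℝ => -(p + (t:ℂ)) * x) (-(x:ℂ)) 0 := by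
    simpa using ((Complex.ofRealCLM.hasDerivAt (x := (0:ℝ))).const_add p).neg.mul_const (x:ℂ)
  have hD : HasDerivAt (fun t : ℝ => Complex.exp (-(p + t) * x))
      (-(x:ℂ) * Complex.exp (-p * x)) 0 := by
    have := h0.cexp
    simpa [mul_comm] using this
  have hW := (hD.hasDerivWithinAt (s := Ioi (0:ℝ)))
  rw [hasDerivWithinAt_iff_tendsto_slope, Set.diff_singleton_eq_self notMem_Ioi_self] at hW
  refine hW.congr' ?_
  filter_upwards [self_mem_nhdsWithin] with t ht
  rw [slope_def_module]
  simp only [sub_zero]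
  rw [Complex.real_smul]
  push_cast
  rw [inv_mul_eq_div]
  simp

lemma lap_slope {g : ℝ → ℂ} (hg : LapS g) {p : ℂ} (hp : p.re = 0) :
    Tendsto (fun t : ℝ => (Lap g (p + t) - Lap g p) / t) (𝓝[>] (0:ℝ))
      (𝓝 (Lap (mneg g) p)) := by
  have key := tendsto_integral_filter_of_dominated_convergence (μ := volume.restrict (Ioi 0))
    (F := fun (t : ℝ) (x : ℝ) => g x * ((Complex.exp (-(p + t) * x) - Complex.exp (-p * x)) / t))
    (f := fun x : ℝ => mneg g x * Complex.exp (-p * x))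
    (bound := fun x : ℝ => ‖mneg g x‖) (l := 𝓝[>] (0:ℝ))
    ?_ ?_ hg.mneg.integrableOn_norm ?_
  · refine Tendsto.congr' ?_ key
    filter_upwards [self_mem_nhdsWithin] with t ht
    have htre : 0 ≤ (p + (t:ℂ)).re := by simp [hp]; exact le_of_lt ht
    have hpre : (0:ℝ) ≤ p.re := le_of_eq hp.symm
    rw [Lap, Lap, ← integral_sub (hg.integrableOn_exp htre) (hg.integrableOn_exp hpre),
      ← integral_div]
    refine integral_congr_ae (Eventually.of_forall fun x => ?_)
    ring
  · refine Eventually.of_forall fun t => ?_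
    exact (hg.cont.mul (by continuity)).aestronglyMeasurable.restrict
  · filter_upwards [self_mem_nhdsWithin] with t ht
    filter_upwards [ae_restrict_mem measurableSet_Ioi] with x hx
    rw [norm_mul, norm_mneg g hx.out.le]
    calc ‖g x‖ * ‖(Complex.exp (-(p + t) * x) - Complex.exp (-p * x)) / t‖
        ≤ ‖g x‖ * x := mul_le_mul_of_nonneg_left (exp_diff_quot_bound hp ht hx.out) (norm_nonneg _)
    _ = x * ‖g x‖ := mul_comm _ _
  · filter_upwards [ae_restrict_mem measurableSet_Ioi] with x hx
    have h1 := (exp_slope_tendsto p x).const_mul (g x)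
    have h2 : mneg g x * Complex.exp (-p * x) = g x * (-(x:ℂ) * Complex.exp (-p * x)) := by
      rw [mneg]; ring
    rw [h2]
    exact h1

lemma itd_boundary {f : ℝ → ℂ} (hf : LapS f) (k : ℕ) {p : ℂ} (hp : p.re = 0) :
    iteratedDeriv (k+1) (Lap f) p = 0 ∨
      iteratedDeriv (k+1) (Lap f) p = Lap (mneg^[k+1] f) p := by
  rw [iteratedDeriv_succ]
  by_cases hdiff : DifferentiableAt ℂ (iteratedDeriv k (Lap f)) p
  case neg => exact Or.inl (deriv_zero_of_not_differentiableAt hdiff)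
  case pos =>
    right
    set g := mneg^[k] f with hgdef
    have hg : LapS g := hf.mneg_iter k
    set d := deriv (iteratedDeriv k (Lap f)) p with hd
    have hD : HasDerivAt (iteratedDeriv k (Lap f)) d p := hdiff.hasDerivAt
    -- restrict to the real ray
    have hC : HasDerivAt (fun w : ℂ => iteratedDeriv k (Lap f) (p + w)) d 0 := by
      refine HasDerivAt.comp_const_add p 0 ?_
      simpa using hD
    have hR : HasDerivAt (fun t : ℝ => iteratedDeriv k (Lap f) (p + t)) d 0 := by
      have := hC.comp_ofReal (z := 0)
      simpa using this
    have hW := hR.hasDerivWithinAt (s := Ioi (0:ℝ))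
    rw [hasDerivWithinAt_iff_tendsto_slope, Set.diff_singleton_eq_self notMem_Ioi_self] at hW
    set c := iteratedDeriv k (Lap f) p with hc
    have hslope : Tendsto (fun t : ℝ => (Lap g (p + t) - c) / t) (𝓝[>] (0:ℝ)) (𝓝 d) := by
      refine hW.congr' ?_
      filter_upwards [self_mem_nhdsWithin] with t ht
      have hre : 0 < (p + (t:ℂ)).re := by simp [hp]; exact ht
      rw [slope_def_module, Complex.real_smul, Complex.ofReal_inv]
      simp only [sub_zero, Complex.ofReal_zero, add_zero]
      rw [lap_itd_interior hf k _ hre, inv_mul_eq_div]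
    -- identify c with Lap g p
    have hceq : Lap g p = c := by
      have h1 : Tendsto (fun t : ℝ => ((Lap g (p + t) - c) / t) * t) (𝓝[>] (0:ℝ)) (𝓝 (d * 0)) := by
        refine hslope.mul ?_
        exact (Complex.continuous_ofReal.tendsto 0).mono_left nhdsWithin_le_nhds
      have h2 : Tendsto (fun t : ℝ => Lap g (p + t) - c) (𝓝[>] (0:ℝ)) (𝓝 (Lap g p - c)) :=
        (lap_cont_ray hg hp).sub_const c
      have h3 : Tendsto (fun t : ℝ => Lap g (p + t) - c) (𝓝[>] (0:ℝ)) (𝓝 (d * 0)) := by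
        refine h1.congr' ?_
        filter_upwards [self_mem_nhdsWithin] with t ht
        have htne : ((t:ℝ):ℂ) ≠ 0 := by exact_mod_cast ne_of_gt ht
        field_simp
      have h4 := tendsto_nhds_unique h2 h3
      rw [mul_zero] at h4
      exact sub_eq_zero.mp h4
    have hfinal : Tendsto (fun t : ℝ => (Lap g (p + t) - Lap g p) / t) (𝓝[>] (0:ℝ)) (𝓝 d) := by
      rw [hceq]; exact hslope
    have hdu := tendsto_nhds_unique hfinal (lap_slope hg hp)
    rw [show (mneg^[k+1] f) = _root_.mneg g from Function.iterate_succ_apply' mneg k f]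
    exact hdu

/-- Lemma 2.2 (one half): the Laplace transform of a function in `𝒮(ℝ₊)` is rapidly
decreasing with all derivatives on the closed half-plane `Re p ≥ 0`. -/
theorem stmt_13 (f : ℝ → ℂ) (hf : ContDiff ℝ (⊤ : ℕ∞) f)
    (h0 : ∀ k : ℕ, iteratedDeriv k f 0 = 0)
    (hdecay : ∀ k N : ℕ, ∃ C : ℝ, ∀ x : ℝ, 0 ≤ x → x ^ N * ‖iteratedDeriv k f x‖ ≤ C)
    (F : ℂ → ℂ) (hF : ∀ p : ℂ, F p = ∫ x in Set.Ioi (0 : ℝ), f x * Complex.exp (-p * x)) :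
    ∀ (N : ℕ) (k : ℕ), ∃ M : ℝ, ∀ p : ℂ, 0 ≤ p.re →
      ‖iteratedDeriv k F p‖ ≤ M * (1 + ‖p‖) ^ (-(N : ℝ)) := by
  have hfS : LapS f := ⟨hf.of_le (by simp), h0, hdecay⟩
  have hFeq : F = Lap f := funext fun p => hF p
  subst hFeq
  intro N k
  obtain ⟨M, hM0, hM⟩ := lap_decay (hfS.mneg_iter k) N
  refine ⟨M, fun p hp => ?_⟩
  rcases lt_or_eq_of_le hp with hlt | heq
  · rw [lap_itd_interior hfS k p hlt]
    exact hM p hp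
  · cases k with
    | zero => simpa using hM p hp
    | succ j =>
      rcases itd_boundary hfS j heq.symm with h | h
      · rw [h, norm_zero]
        exact mul_nonneg hM0 (Real.rpow_nonneg (by positivity) _)
      · rw [h]; exact hM p hp
end

section
/- For 0 < α < 1 and x > 0, the Laplace transform of Ψ_{α,β,y}(x) = x^{β-1} e^{-y x^α} (β > 0, y > 0) at ξ > 0 equals ξ^{-β} 𝕃_{α,β}(y/ξ^α), where 𝕃_{α,β}(z) = ∑_{n=0}^∞ ((-1)^n Γ(αn+β)/n!) z^n; i.e., ∫_0^∞ x^{β-1} exp(-y x^α - ξ x) dx = ξ^{-β} ∑_{n=0}^∞ ((-1)^n Γ(αn+β)/n!) (y/ξ^α)^n. -/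
/-!
Expand `exp (-y x^α) = ∑ (-y)ⁿ x^{αn} / n!` and integrate term by term against `x^{β-1} e^{-ξx}`,
each term being an Euler integral `∫₀^∞ x^{s-1} e^{-ξx} dx = ξ^{-s} Γ(s)`. Term-by-term integration
is justified because the series of absolute values converges: by log-convexity of `Γ`,
`Γ(s + α) ≤ Γ(s) s^α`, so the ratio of consecutive terms is `O(n^{α-1})`, which tends to `0` as
`α < 1`.
-/

open MeasureTheory Real Filter Set Topology
open scoped Nat

namespace Real

theorem Gamma_add_le_Gamma_mul_rpow {s a : ℝ} (hs : 0 < s) (ha₀ : 0 ≤ a) (ha₁ : a ≤ 1) :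
    Gamma (s + a) ≤ Gamma s * s ^ a := by
  have hΓ : 0 < Gamma s := Gamma_pos_of_pos hs
  have hlog : log (Gamma (s + a)) ≤ log (Gamma s) + a * log s := by
    have := convexOn_log_Gamma.2 (mem_Ioi.2 hs) (mem_Ioi.2 (by linarith : 0 < s + 1))
      (sub_nonneg.2 ha₁) ha₀ (by ring)
    simp only [smul_eq_mul, Function.comp_apply, Gamma_add_one hs.ne',
      log_mul hs.ne' hΓ.ne', show (1 - a) * s + a * (s + 1) = s + a by ring] at this
    linarith
  calc Gamma (s + a) = exp (log (Gamma (s + a))) :=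
        (exp_log (Gamma_pos_of_pos (by linarith))).symm
    _ ≤ exp (log (Gamma s) + a * log s) := exp_le_exp.2 hlog
    _ = Gamma s * s ^ a := by rw [exp_add, exp_log hΓ, rpow_def_of_pos hs, mul_comm a]

end Real

theorem tendsto_rpow_div_natCast_add_one {a b : ℝ} (ha₀ : 0 ≤ a) (ha₁ : a < 1) (hb : 0 < b) :
    Tendsto (fun n : ℕ => (a * n + b) ^ a / (n + 1)) atTop (𝓝 0) := by
  have hlim : Tendsto (fun n : ℕ => (a + b) ^ a * ((n : ℝ) + 1) ^ (-(1 - a))) atTop (𝓝 0) := by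
    simpa using ((tendsto_rpow_neg_atTop (sub_pos.2 ha₁)).comp
      (tendsto_atTop_add_const_right _ 1 tendsto_natCast_atTop_atTop)).const_mul ((a + b) ^ a)
  refine squeeze_zero (fun n => by positivity) (fun n => ?_) hlim
  have hn : (0 : ℝ) < n + 1 := by positivity
  calc (a * n + b) ^ a / (n + 1) ≤ ((a + b) * (n + 1)) ^ a / (n + 1) := by
        gcongr
        nlinarith [(Nat.cast_nonneg n : (0:ℝ) ≤ n)]
    _ = (a + b) ^ a * ((n : ℝ) + 1) ^ (-(1 - a)) := by
        rw [mul_rpow (by positivity) hn.le, rpow_neg hn.le, rpow_sub hn, rpow_one]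
        field_simp

theorem summable_Gamma_div_factorial_mul_pow {a b : ℝ} (ha₀ : 0 ≤ a) (ha₁ : a < 1) (hb : 0 < b)
    (z : ℝ) : Summable fun n : ℕ => Gamma (a * n + b) / n ! * z ^ n := by
  have hΓ : ∀ n : ℕ, 0 < Gamma (a * n + b) := fun n => Gamma_pos_of_pos (by positivity)
  have hlim : Tendsto (fun n : ℕ => |z| * ((a * n + b) ^ a / (n + 1))) atTop (𝓝 0) := by
    simpa using (tendsto_rpow_div_natCast_add_one ha₀ ha₁ hb).const_mul |z|
  refine summable_of_ratio_norm_eventually_le (r := 1 / 2) (by norm_num) ?_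
  filter_upwards [hlim.eventually_le_const (by norm_num : (0 : ℝ) < 1 / 2)] with n hn
  have hstep : Gamma (a * (n + 1 : ℕ) + b) ≤ Gamma (a * n + b) * (a * n + b) ^ a := by
    rw [show a * ((n + 1 : ℕ) : ℝ) + b = a * n + b + a by push_cast; ring]
    exact Gamma_add_le_Gamma_mul_rpow (by positivity) ha₀ ha₁.le
  simp only [norm_mul, norm_div, norm_pow, Real.norm_eq_abs, abs_of_pos (hΓ _), Nat.abs_cast]
  calc Gamma (a * (n + 1 : ℕ) + b) / (n + 1)! * |z| ^ (n + 1)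
      ≤ Gamma (a * n + b) * (a * n + b) ^ a / (n + 1)! * |z| ^ (n + 1) := by gcongr
    _ = |z| * ((a * n + b) ^ a / (n + 1)) * (Gamma (a * n + b) / n ! * |z| ^ n) := by
        push_cast [Nat.factorial_succ]; field_simp; ring
    _ ≤ 1 / 2 * (Gamma (a * n + b) / n ! * |z| ^ n) := by gcongr

theorem hasSum_pow_div_factorial_mul_rpow_mul_exp {α β ξ c x : ℝ} (hx : 0 < x) :
    HasSum (fun n : ℕ => c ^ n / n ! * (x ^ (α * n + β - 1) * exp (-(ξ * x))))
      (x ^ (β - 1) * exp (c * x ^ α - ξ * x)) := by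
  have hexp := (NormedSpace.expSeries_div_hasSum_exp (c * x ^ α)).mul_right
    (x ^ (β - 1) * exp (-(ξ * x)))
  rw [← exp_eq_exp_ℝ, ← mul_assoc, mul_comm (exp _), mul_assoc, ← exp_add, ← sub_eq_add_neg] at hexp
  refine hexp.congr_fun fun n => ?_
  rw [show α * n + β - 1 = α * n + (β - 1) by ring, rpow_add hx, rpow_mul hx.le, rpow_natCast]
  ring

theorem integral_pow_div_factorial_mul_rpow_mul_exp {α β ξ : ℝ} (hα : 0 ≤ α) (hβ : 0 < β)
    (hξ : 0 < ξ) (c : ℝ) (n : ℕ) :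
    ∫ x in Ioi 0, c ^ n / n ! * (x ^ (α * n + β - 1) * exp (-(ξ * x)))
      = ξ ^ (-β) * (Gamma (α * n + β) / n ! * (c / ξ ^ α) ^ n) := by
  have hξ' : 0 < 1 / ξ := one_div_pos.2 hξ
  rw [integral_const_mul, integral_rpow_mul_exp_neg_mul_Ioi (by positivity) hξ, rpow_add hξ',
    rpow_mul hξ'.le, rpow_natCast, one_div, inv_rpow hξ.le, inv_rpow hξ.le, ← rpow_neg hξ.le β,
    div_pow, inv_pow]
  field_simp

theorem integral_rpow_mul_exp_mul_rpow_sub_mul {α β ξ : ℝ} (hα₀ : 0 ≤ α) (hα₁ : α < 1)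
    (hβ : 0 < β) (hξ : 0 < ξ) (c : ℝ) :
    ∫ x in Ioi 0, x ^ (β - 1) * exp (c * x ^ α - ξ * x)
      = ξ ^ (-β) * ∑' n : ℕ, Gamma (α * n + β) / n ! * (c / ξ ^ α) ^ n := by
  set F : ℝ → ℕ → ℝ → ℝ := fun d n x => d ^ n / n ! * (x ^ (α * n + β - 1) * exp (-(ξ * x)))
  have hF_int (n : ℕ) : IntegrableOn (F c n) (Ioi 0) := by
    have hs : -1 < α * n + β - 1 := by linarith [show 0 < α * n + β by positivity]
    have := integrableOn_rpow_mul_exp_neg_mul_rpow hs zero_lt_one hξ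
    simp only [rpow_one, neg_mul] at this
    exact this.const_mul _
  have hF_norm (n : ℕ) : ∫ x in Ioi 0, ‖F c n x‖ = ∫ x in Ioi 0, F |c| n x := by
    refine setIntegral_congr_fun measurableSet_Ioi fun x (hx : 0 < x) => ?_
    simp only [F, norm_mul, norm_div, norm_pow, Real.norm_eq_abs, Nat.abs_cast,
      abs_of_pos (rpow_pos_of_pos hx _), abs_of_pos (exp_pos _)]
  have hsum : Summable fun n => ∫ x in Ioi 0, ‖F c n x‖ := by
    simp only [hF_norm, F, integral_pow_div_factorial_mul_rpow_mul_exp hα₀ hβ hξ]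
    exact (summable_Gamma_div_factorial_mul_pow hα₀ hα₁ hβ _).mul_left _
  have hF_sum : ∫ x in Ioi 0, ∑' n, F c n x = ∫ x in Ioi 0, x ^ (β - 1) * exp (c * x ^ α - ξ * x) :=
    setIntegral_congr_fun measurableSet_Ioi fun x hx =>
      (hasSum_pow_div_factorial_mul_rpow_mul_exp hx).tsum_eq
  rw [← hF_sum, ← (hasSum_integral_of_summable_integral_norm hF_int hsum).tsum_eq, ← tsum_mul_left]
  exact tsum_congr (integral_pow_div_factorial_mul_rpow_mul_exp hα₀ hβ hξ c)

theorem stmt_19_general (α β y ξ : ℝ) (hα0 : 0 < α) (hα1 : α < 1)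
    (hβ : 0 < β) (hξ : 0 < ξ) :
    ∫ x in Set.Ioi (0 : ℝ), x ^ (β - 1) * Real.exp (-y * x ^ α - ξ * x)
      = ξ ^ (-β) *
          ∑' n : ℕ, ((-1 : ℝ) ^ n * Real.Gamma (α * n + β) / (n.factorial : ℝ)) *
            (y / ξ ^ α) ^ n := by
  rw [integral_rpow_mul_exp_mul_rpow_sub_mul hα0.le hα1 hβ hξ]
  congr 1
  refine tsum_congr fun n => ?_
  rw [neg_div, neg_pow]
  ring

/-- Formula (1.12): for `0 < α < 1` and `β, y, ξ > 0`, the Laplace transform of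
`Ψ_{α,β,y}(x) = x^{β-1} e^{-y x^α}` at `ξ` equals `ξ^{-β} 𝕃_{α,β}(y/ξ^α)`. -/
theorem stmt_19 (α β y ξ : ℝ) (hα0 : 0 < α) (hα1 : α < 1)
    (hβ : 0 < β) (hy : 0 < y) (hξ : 0 < ξ) :
    ∫ x in Set.Ioi (0 : ℝ), x ^ (β - 1) * Real.exp (-y * x ^ α - ξ * x)
      = ξ ^ (-β) *
          ∑' n : ℕ, ((-1 : ℝ) ^ n * Real.Gamma (α * n + β) / (n.factorial : ℝ)) *
            (y / ξ ^ α) ^ n :=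
  stmt_19_general α β y ξ hα0 hα1 hβ hξ
end
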